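/- arXiv:2010.10497 — 4 statements merged into one kernel-verified Lean document; each statement's English description precedes it below -/
import Mathlib

section
/- Let X and Y be Banach spaces such that the closed unit ball of X* is sequentially weak* compact, and let s > 0. Suppose T : X* → Y* satisfies: (A1) T is sequentially weak*-to-weak* continuous (if u_k converges weak* to u in X*, then T u_k converges weak* to T u in Y*); (A2) T(a u) = a^s T(u) for all a > 0 and all u ∈ X*; (A3) there exist sequences of linear isometric isomorphisms σ_k^{X*} : X* → X* and σ_k^{Y*} : Y* → Y* (k ∈ ℕ) such that T ∘ σ_k^{X*} = σ_k^{Y*} ∘ T for all k, and σ_k^{Y*} f converges weak* to 0 for every f ∈ Y*. Then the following are equivalent: (1) T(X*) is non-meagre in Y*; (2) T(X*) = Y*; (3) T is open at the origin, i.e. for every ε > 0 there is δ > 0 such that every f ∈ Y* with ‖f‖_{Y*} ≤ δ equals T u for some u ∈ X* with ‖u‖_{X*} ≤ ε; (4) there is a constant C > 0 such that for every f ∈ Y* there exists u ∈ X* with T u = f and ‖u‖_{X*}^s ≤ C ‖f‖_{Y*}. -/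
open MeasureTheory Filter Topology

/-- A sequence in a dual space converges weak-star. -/
def WeakStarTendsto {X : Type*} [NormedAddCommGroup X] [NormedSpace ℝ X]
    (u : ℕ → StrongDual ℝ X) (u₀ : StrongDual ℝ X) : Prop :=
  ∀ x : X, Tendsto (fun k => u k x) atTop (𝓝 (u₀ x))

/-!
Sequential weak* compactness of balls in `X*` and weak* continuity of `T` make every image
`T(B_c)` of a closed ball weak* sequentially closed, hence norm closed. If `T(X*) = ⋃ₙ T(Bₙ)`
is non-meagre, Baire's theorem yields a ball `B(f₀, δ) ⊆ T(B_c)`. The symmetries `σₖ` commute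
with `T`, preserve norms and push `f₀` weak* to `0`; passing to weak* limits of the shifted
preimages gives `B(0, δ) ⊆ T(B_c)`. Homogeneity rescales this inclusion into openness at `0`
and into the bound `‖u‖ ^ s ≤ C ‖f‖`.
-/

open Metric Set

theorem IsClosed.interior_nonempty_of_not_isMeagre {X : Type*} [TopologicalSpace X] {s : Set X}
    (hc : IsClosed s) (hs : ¬IsMeagre s) : (interior s).Nonempty := by
  rw [nonempty_iff_ne_empty]
  exact fun h => hs (hc.isNowhereDense_iff.mpr h).isMeagre

section Homogeneous

variable {E F : Type*} [NormedAddCommGroup E] [NormedSpace ℝ E]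
  [NormedAddCommGroup F] [NormedSpace ℝ F]

def IsPosHomogeneous (s : ℝ) (T : E → F) : Prop :=
  ∀ a : ℝ, 0 < a → ∀ u, T (a • u) = a ^ s • T u

variable {s : ℝ} {T : E → F}

theorem IsPosHomogeneous.map_zero (hT : IsPosHomogeneous s T) (hs : s ≠ 0) : T 0 = 0 := by
  have h2 : T 0 = (2 : ℝ) ^ s • T 0 := by simpa using hT 2 two_pos 0
  have h2s : (2 : ℝ) ^ s ≠ 1 := by
    rw [← Real.rpow_zero 2, Ne, Real.rpow_right_inj two_pos (by norm_num)]
    exact hs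
  have h : ((2 : ℝ) ^ s - 1) • T 0 = 0 := by rw [sub_smul, ← h2, one_smul, sub_self]
  exact (smul_eq_zero.mp h).resolve_left (sub_ne_zero.mpr h2s)

theorem IsPosHomogeneous.closedBall_subset_image_smul (hT : IsPosHomogeneous s T) {δ c a : ℝ}
    (h : closedBall 0 δ ⊆ T '' closedBall 0 c) (ha : 0 < a) :
    closedBall 0 (a ^ s * δ) ⊆ T '' closedBall 0 (a * c) := by
  intro f hf
  have has : 0 < a ^ s := Real.rpow_pos_of_pos ha s
  obtain ⟨u, hu, hTu⟩ : (a ^ s)⁻¹ • f ∈ T '' closedBall 0 c := by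
    apply h
    rw [mem_closedBall_zero_iff, norm_smul, norm_inv, Real.norm_of_nonneg has.le,
      inv_mul_le_iff₀ has]
    exact mem_closedBall_zero_iff.mp hf
  refine ⟨a • u, ?_, by rw [hT a ha, hTu, smul_inv_smul₀ has.ne']⟩
  rw [mem_closedBall_zero_iff, norm_smul, Real.norm_of_nonneg ha.le]
  exact mul_le_mul_of_nonneg_left (mem_closedBall_zero_iff.mp hu) ha.le

theorem IsPosHomogeneous.exists_norm_rpow_le (hT : IsPosHomogeneous s T) (hs : 0 < s) {δ : ℝ}
    (hδ : 0 < δ) (h : closedBall 0 δ ⊆ T '' closedBall 0 1) (f : F) :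
    ∃ u, T u = f ∧ ‖u‖ ^ s ≤ δ⁻¹ * ‖f‖ := by
  rcases eq_or_ne f 0 with rfl | hf
  · exact ⟨0, hT.map_zero hs.ne', by simp [Real.zero_rpow hs.ne']⟩
  set a := (‖f‖ / δ) ^ s⁻¹
  have ha : 0 < a := by positivity
  have has : a ^ s = ‖f‖ / δ := by
    rw [← Real.rpow_mul (by positivity), inv_mul_cancel₀ hs.ne', Real.rpow_one]
  have hfa : f ∈ closedBall 0 (a ^ s * δ) := by
    rw [mem_closedBall_zero_iff, has, div_mul_cancel₀ _ hδ.ne']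
  obtain ⟨u, hu, hTu⟩ := hT.closedBall_subset_image_smul h ha hfa
  refine ⟨u, hTu, ?_⟩
  calc ‖u‖ ^ s ≤ a ^ s := by
        gcongr
        simpa using mem_closedBall_zero_iff.mp hu
    _ = δ⁻¹ * ‖f‖ := by rw [has, div_eq_inv_mul]

end Homogeneous

section WeakStar

variable {X Y : Type*} [NormedAddCommGroup X] [NormedSpace ℝ X]
  [NormedAddCommGroup Y] [NormedSpace ℝ Y]

theorem WeakStarTendsto.unique {u : ℕ → StrongDual ℝ X} {u₀ u₁ : StrongDual ℝ X}
    (h₀ : WeakStarTendsto u u₀) (h₁ : WeakStarTendsto u u₁) : u₀ = u₁ :=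
  ContinuousLinearMap.ext fun x => tendsto_nhds_unique (h₀ x) (h₁ x)

theorem WeakStarTendsto.comp_tendsto {u : ℕ → StrongDual ℝ X} {u₀ : StrongDual ℝ X}
    (h : WeakStarTendsto u u₀) {φ : ℕ → ℕ} (hφ : Tendsto φ atTop atTop) :
    WeakStarTendsto (u ∘ φ) u₀ :=
  fun x => (h x).comp hφ

theorem WeakStarTendsto.const_smul {u : ℕ → StrongDual ℝ X} {u₀ : StrongDual ℝ X}
    (h : WeakStarTendsto u u₀) (c : ℝ) : WeakStarTendsto (c • u) (c • u₀) :=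
  fun x => by simpa using (h x).const_mul c

theorem WeakStarTendsto.add_const {u : ℕ → StrongDual ℝ X} {u₀ : StrongDual ℝ X}
    (h : WeakStarTendsto u u₀) (v : StrongDual ℝ X) :
    WeakStarTendsto (fun k => u k + v) (u₀ + v) :=
  fun x => by simpa using (h x).add_const (v x)

theorem Filter.Tendsto.weakStarTendsto {u : ℕ → StrongDual ℝ X} {u₀ : StrongDual ℝ X}
    (h : Tendsto u atTop (𝓝 u₀)) : WeakStarTendsto u u₀ :=
  fun x => ((ContinuousLinearMap.apply ℝ ℝ x).continuous.tendsto u₀).comp h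

theorem WeakStarTendsto.norm_le {u : ℕ → StrongDual ℝ X} {u₀ : StrongDual ℝ X} {c : ℝ}
    (h : WeakStarTendsto u u₀) (hu : ∀ k, ‖u k‖ ≤ c) : ‖u₀‖ ≤ c := by
  refine ContinuousLinearMap.opNorm_le_bound _ ((norm_nonneg _).trans (hu 0)) fun x => ?_
  refine le_of_tendsto (h x).norm (Eventually.of_forall fun k => ?_)
  exact (u k).le_opNorm_of_le le_rfl |>.trans (by gcongr; exact hu k)

variable (X) in
def UnitBallSeqWeakStarCompact : Prop :=
  ∀ u : ℕ → StrongDual ℝ X, (∀ k, ‖u k‖ ≤ 1) →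
    ∃ (u₀ : StrongDual ℝ X) (φ : ℕ → ℕ), StrictMono φ ∧ WeakStarTendsto (u ∘ φ) u₀

theorem UnitBallSeqWeakStarCompact.exists_weakStarTendsto
    (hX : UnitBallSeqWeakStarCompact X) {c : ℝ} (hc : 0 < c) {u : ℕ → StrongDual ℝ X}
    (hu : ∀ k, ‖u k‖ ≤ c) :
    ∃ u₀ : StrongDual ℝ X, ‖u₀‖ ≤ c ∧
      ∃ φ : ℕ → ℕ, StrictMono φ ∧ WeakStarTendsto (u ∘ φ) u₀ := by
  obtain ⟨w₀, φ, hφ, hw⟩ := hX (c⁻¹ • u) fun k => by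
    rw [Pi.smul_apply, norm_smul, norm_inv, Real.norm_of_nonneg hc.le, inv_mul_le_one₀ hc]
    exact hu k
  have hlim : WeakStarTendsto (u ∘ φ) (c • w₀) := by
    have hcu : c • (c⁻¹ • u) ∘ φ = u ∘ φ := by
      ext1 k; exact smul_inv_smul₀ hc.ne' (u (φ k))
    simpa only [hcu] using hw.const_smul c
  exact ⟨c • w₀, hlim.norm_le fun k => hu (φ k), φ, hφ, hlim⟩

def SeqWeakStarContinuous (T : StrongDual ℝ X → StrongDual ℝ Y) : Prop :=
  ∀ u u₀, WeakStarTendsto u u₀ → WeakStarTendsto (T ∘ u) (T u₀)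

variable {T : StrongDual ℝ X → StrongDual ℝ Y}

theorem SeqWeakStarContinuous.mem_image_closedBall (hX : UnitBallSeqWeakStarCompact X)
    (hT : SeqWeakStarContinuous T) {c : ℝ} (hc : 0 < c) {u : ℕ → StrongDual ℝ X}
    (hu : ∀ k, ‖u k‖ ≤ c) {f : StrongDual ℝ Y} (hf : WeakStarTendsto (T ∘ u) f) :
    f ∈ T '' closedBall 0 c := by
  obtain ⟨u₀, hu₀, φ, hφ, hlim⟩ := hX.exists_weakStarTendsto hc hu
  exact ⟨u₀, mem_closedBall_zero_iff.mpr hu₀,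
    (hT _ _ hlim).unique (hf.comp_tendsto hφ.tendsto_atTop)⟩

theorem SeqWeakStarContinuous.isClosed_image_closedBall (hX : UnitBallSeqWeakStarCompact X)
    (hT : SeqWeakStarContinuous T) {c : ℝ} (hc : 0 < c) : IsClosed (T '' closedBall 0 c) := by
  refine IsSeqClosed.isClosed fun f f₀ hf hlim => ?_
  choose u hu hTu using hf
  refine hT.mem_image_closedBall hX hc (fun k => mem_closedBall_zero_iff.mp (hu k)) ?_
  simpa [Function.comp_def, hTu] using hlim.weakStarTendsto

theorem SeqWeakStarContinuous.exists_closedBall_subset_image (hX : UnitBallSeqWeakStarCompact X)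
    (hT : SeqWeakStarContinuous T) (h : ¬IsMeagre (range T)) :
    ∃ c > 0, ∃ f₀ δ, 0 < δ ∧ closedBall f₀ δ ⊆ T '' closedBall 0 c := by
  have hcover : range T ⊆ ⋃ n : ℕ, T '' closedBall 0 (n + 1) := by
    rintro _ ⟨u, rfl⟩
    obtain ⟨n, hn⟩ := exists_nat_ge ‖u‖
    exact mem_iUnion.mpr ⟨n, u, mem_closedBall_zero_iff.mpr (by linarith), rfl⟩
  obtain ⟨n, hn⟩ : ∃ n : ℕ, ¬IsMeagre (T '' closedBall 0 (n + 1)) := by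
    by_contra! hmeagre
    exact h ((isMeagre_iUnion hmeagre).mono hcover)
  obtain ⟨f₀, hf₀⟩ :=
    (hT.isClosed_image_closedBall hX n.cast_add_one_pos).interior_nonempty_of_not_isMeagre hn
  obtain ⟨δ, hδ, hball⟩ :=
    nhds_basis_closedBall.mem_iff.mp (mem_interior_iff_mem_nhds.mp hf₀)
  exact ⟨n + 1, n.cast_add_one_pos, f₀, δ, hδ, hball⟩

/-- Hypothesis (A3). In the model case the `σ k` are translations by `k`, which send every
functional weak* to `0`. -/
def HasVanishingSymmetries (T : StrongDual ℝ X → StrongDual ℝ Y) : Prop :=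
  ∃ (σX : ℕ → StrongDual ℝ X ≃ₗᵢ[ℝ] StrongDual ℝ X)
    (σY : ℕ → StrongDual ℝ Y ≃ₗᵢ[ℝ] StrongDual ℝ Y),
    (∀ k u, T (σX k u) = σY k (T u)) ∧ ∀ f, WeakStarTendsto (fun k => σY k f) 0

theorem SeqWeakStarContinuous.closedBall_zero_subset_image (hX : UnitBallSeqWeakStarCompact X)
    (hT : SeqWeakStarContinuous T) (hσ : HasVanishingSymmetries T) {c : ℝ} (hc : 0 < c)
    {f₀ : StrongDual ℝ Y} {δ : ℝ} (h : closedBall f₀ δ ⊆ T '' closedBall 0 c) :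
    closedBall 0 δ ⊆ T '' closedBall 0 c := by
  obtain ⟨σX, σY, hcomm, hvanish⟩ := hσ
  intro g hg
  have hshift : ∀ k, ∃ u, ‖u‖ ≤ c ∧ T u = σY k f₀ + g := by
    intro k
    obtain ⟨u, hu, hTu⟩ : f₀ + (σY k).symm g ∈ T '' closedBall 0 c := by
      apply h
      rwa [mem_closedBall_iff_norm, add_sub_cancel_left, LinearIsometryEquiv.norm_map,
        ← mem_closedBall_zero_iff]
    refine ⟨σX k u, by rwa [LinearIsometryEquiv.norm_map, ← mem_closedBall_zero_iff], ?_⟩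
    rw [hcomm, hTu, map_add, LinearIsometryEquiv.apply_symm_apply]
  choose u hu hTu using hshift
  refine hT.mem_image_closedBall hX hc hu ?_
  simpa [Function.comp_def, hTu] using (hvanish f₀).add_const g

end WeakStar

theorem nonlinear_open_mapping_principle_general
    (X Y : Type*) [NormedAddCommGroup X] [NormedSpace ℝ X]
    [NormedAddCommGroup Y] [NormedSpace ℝ Y]
    (hball : ∀ u : ℕ → StrongDual ℝ X, (∀ k, ‖u k‖ ≤ 1) →
      ∃ (u₀ : StrongDual ℝ X) (φ : ℕ → ℕ), StrictMono φ ∧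
        WeakStarTendsto (u ∘ φ) u₀)
    (s : ℝ) (hs : 0 < s)
    (T : StrongDual ℝ X → StrongDual ℝ Y)
    -- (A1) sequential weak*-to-weak* continuity
    (hA1 : ∀ (u : ℕ → StrongDual ℝ X) (u₀ : StrongDual ℝ X),
      WeakStarTendsto u u₀ →
      ∀ y : Y, Tendsto (fun k => T (u k) y) atTop (𝓝 (T u₀ y)))
    -- (A2) positive s-homogeneity
    (hA2 : ∀ a : ℝ, 0 < a → ∀ u, T (a • u) = a ^ s • T u)
    -- (A3) generalized translation invariance
    (hA3 : ∃ (σX : ℕ → StrongDual ℝ X ≃ₗᵢ[ℝ] StrongDual ℝ X)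
             (σY : ℕ → StrongDual ℝ Y ≃ₗᵢ[ℝ] StrongDual ℝ Y),
      (∀ k u, T (σX k u) = σY k (T u)) ∧
      (∀ f : StrongDual ℝ Y, ∀ y : Y,
        Tendsto (fun k => σY k f y) atTop (𝓝 0))) :
    List.TFAE
      [ ¬ IsMeagre (Set.range T),
        Function.Surjective T,
        ∀ ε > 0, ∃ δ > 0, ∀ f : StrongDual ℝ Y, ‖f‖ ≤ δ →
          ∃ u, T u = f ∧ ‖u‖ ≤ ε,
        ∃ C > 0, ∀ f : StrongDual ℝ Y,
          ∃ u, T u = f ∧ ‖u‖ ^ s ≤ C * ‖f‖ ] := by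
  have hT : SeqWeakStarContinuous T := hA1
  have hσ : HasVanishingSymmetries T := hA3
  have hhom : IsPosHomogeneous s T := hA2
  have ball_iff {δ ε : ℝ} : closedBall 0 δ ⊆ T '' closedBall 0 ε ↔
      ∀ f : StrongDual ℝ Y, ‖f‖ ≤ δ → ∃ u, T u = f ∧ ‖u‖ ≤ ε := by
    simp only [subset_def, mem_closedBall_zero_iff, mem_image, and_comm]
  tfae_have 1 → 3 := by
    intro hT_range ε hε
    obtain ⟨c, hc, f₀, δ, hδ, hsub⟩ := hT.exists_closedBall_subset_image hball hT_range
    have h0 := hT.closedBall_zero_subset_image hball hσ hc hsub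
    refine ⟨(ε / c) ^ s * δ, by positivity, ball_iff.mp ?_⟩
    simpa [div_mul_cancel₀ ε hc.ne'] using hhom.closedBall_subset_image_smul h0 (div_pos hε hc)
  tfae_have 3 → 4 := fun h3 =>
    have ⟨δ, hδ, h⟩ := h3 1 one_pos
    ⟨δ⁻¹, inv_pos.mpr hδ, hhom.exists_norm_rpow_le hs hδ (ball_iff.mpr h)⟩
  tfae_have 4 → 2 := fun ⟨_, _, h⟩ f => (h f).imp fun _ => And.left
  tfae_have 2 → 1 := fun h => by
    rw [range_eq_univ.mpr h]
    exact not_isMeagre_of_isOpen isOpen_univ univ_nonempty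
  tfae_finish

/-- **Nonlinear open mapping principle** (Theorem A / Theorem 2.1). -/
theorem nonlinear_open_mapping_principle
    (X Y : Type*) [NormedAddCommGroup X] [NormedSpace ℝ X] [CompleteSpace X]
    [NormedAddCommGroup Y] [NormedSpace ℝ Y] [CompleteSpace Y]
    (hball : ∀ u : ℕ → StrongDual ℝ X, (∀ k, ‖u k‖ ≤ 1) →
      ∃ (u₀ : StrongDual ℝ X) (φ : ℕ → ℕ), StrictMono φ ∧
        WeakStarTendsto (u ∘ φ) u₀)
    (s : ℝ) (hs : 0 < s)
    (T : StrongDual ℝ X → StrongDual ℝ Y)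
    -- (A1) sequential weak*-to-weak* continuity
    (hA1 : ∀ (u : ℕ → StrongDual ℝ X) (u₀ : StrongDual ℝ X),
      WeakStarTendsto u u₀ →
      ∀ y : Y, Tendsto (fun k => T (u k) y) atTop (𝓝 (T u₀ y)))
    -- (A2) positive s-homogeneity
    (hA2 : ∀ a : ℝ, 0 < a → ∀ u, T (a • u) = a ^ s • T u)
    -- (A3) generalized translation invariance
    (hA3 : ∃ (σX : ℕ → StrongDual ℝ X ≃ₗᵢ[ℝ] StrongDual ℝ X)
             (σY : ℕ → StrongDual ℝ Y ≃ₗᵢ[ℝ] StrongDual ℝ Y),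
      (∀ k u, T (σX k u) = σY k (T u)) ∧
      (∀ f : StrongDual ℝ Y, ∀ y : Y,
        Tendsto (fun k => σY k f y) atTop (𝓝 0))) :
    List.TFAE
      [ ¬ IsMeagre (Set.range T),
        Function.Surjective T,
        ∀ ε > 0, ∃ δ > 0, ∀ f : StrongDual ℝ Y, ‖f‖ ≤ δ →
          ∃ u, T u = f ∧ ‖u‖ ≤ ε,
        ∃ C > 0, ∀ f : StrongDual ℝ Y,
          ∃ u, T u = f ∧ ‖u‖ ^ s ≤ C * ‖f‖ ] :=
  nonlinear_open_mapping_principle_general X Y hball s hs T hA1 hA2 hA3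
end

section
/- Let X and Z be Banach spaces and I an index set. For each i ∈ I let T_i : X → Z be a map and assume: (1) for every i ∈ I the function u ↦ ‖T_i u‖_Z is weakly sequentially lower semicontinuous on X (if u_k converges weakly to u then ‖T_i u‖_Z ≤ liminf_k ‖T_i u_k‖_Z); (2) there is ε > 0 such that sup_{i ∈ I} ‖T_i u‖_Z < ∞ whenever ‖u‖_X ≤ ε; (3) there are sequences of linear isometric isomorphisms σ_k^X : X → X and σ_k^Z : Z → Z (k ∈ ℕ) such that T_i ∘ σ_k^X = σ_k^Z ∘ T_i for all i ∈ I and k ∈ ℕ, and σ_k^X u converges weakly to 0 for every u ∈ X. Then there exists δ > 0 such that sup over all u with ‖u‖_X ≤ δ of sup_{i ∈ I} ‖T_i u‖_Z is finite. -/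
/-!
The sets `F m = {u | ∀ i, ‖T i u‖ ≤ m}` are closed by weak lower semicontinuity and cover the
ball of radius `ε` by pointwise boundedness, so by Baire one of them contains a ball `B(u₀, r)`.
Given `‖u‖ ≤ r`, the points `σX k u₀ + u = σX k (u₀ + (σX k)⁻¹ u)` lie in `σX k (B(u₀, r))`, where
`‖T i ·‖` is still bounded by `m` because the `σ`'s are isometries commuting with `T i`; since they
converge weakly to `u`, lower semicontinuity gives `‖T i u‖ ≤ m`.
-/

open Filter Topology

/-- Weak convergence of a sequence in a normed space. -/
def WeakTendsto {X : Type*} [NormedAddCommGroup X] [NormedSpace ℝ X]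
    (u : ℕ → X) (u₀ : X) : Prop :=
  ∀ φ : StrongDual ℝ X, Tendsto (fun k => φ (u k)) atTop (𝓝 (φ u₀))

open Set Metric

section Baire

variable {X ι : Type*} [TopologicalSpace X] [BaireSpace X] [Countable ι]

theorem exists_nonempty_interior_of_isOpen_subset_iUnion {U : Set X} (hU : IsOpen U)
    (hne : U.Nonempty) {f : ι → Set X} (hc : ∀ i, IsClosed (f i)) (hcover : U ⊆ ⋃ i, f i) :
    ∃ i, (interior (f i)).Nonempty := by
  obtain ⟨i₀, -⟩ := mem_iUnion.mp (hcover hne.some_mem)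
  have hcover' : ⋃ i, (f i ∪ Uᶜ) = univ := by
    refine eq_univ_of_forall fun x => ?_
    by_cases hx : x ∈ U
    · obtain ⟨i, hi⟩ := mem_iUnion.mp (hcover hx)
      exact mem_iUnion.mpr ⟨i, Or.inl hi⟩
    · exact mem_iUnion.mpr ⟨i₀, Or.inr hx⟩
  have hdense := dense_iUnion_interior_of_closed (fun i => (hc i).union hU.isClosed_compl) hcover'
  obtain ⟨x, hxU, hxD⟩ := hdense.inter_open_nonempty U hU hne
  obtain ⟨i, hi⟩ := mem_iUnion.mp hxD
  refine ⟨i, x, interior_maximal ?_ (isOpen_interior.inter hU) ⟨hi, hxU⟩⟩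
  rintro y ⟨hy, hyU⟩
  exact (interior_subset hy).resolve_right (not_not.mpr hyU)

end Baire

namespace WeakTendsto

variable {X : Type*} [NormedAddCommGroup X] [NormedSpace ℝ X] {u : ℕ → X} {u₀ : X}

theorem of_tendsto (h : Tendsto u atTop (𝓝 u₀)) : WeakTendsto u u₀ :=
  fun φ => (φ.continuous.tendsto u₀).comp h

theorem add_const (h : WeakTendsto u u₀) (v : X) :
    WeakTendsto (fun k => u k + v) (u₀ + v) := by
  intro φ
  simpa only [map_add] using (h φ).add_const (φ v)

end WeakTendsto

def WeakSeqLowerSemicontinuous {X : Type*} [NormedAddCommGroup X] [NormedSpace ℝ X]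
    (f : X → ℝ) : Prop :=
  ∀ (u : ℕ → X) (u₀ : X), WeakTendsto u u₀ → f u₀ ≤ atTop.liminf fun k => f (u k)

namespace WeakSeqLowerSemicontinuous

variable {X : Type*} [NormedAddCommGroup X] [NormedSpace ℝ X] {f : X → ℝ}

theorem le_of_forall_le (hf : WeakSeqLowerSemicontinuous f) (hf₀ : ∀ x, 0 ≤ f x)
    {u : ℕ → X} {u₀ : X} (hu : WeakTendsto u u₀) {m : ℝ} (hm : ∀ k, f (u k) ≤ m) :
    f u₀ ≤ m :=
  (hf u u₀ hu).trans <| liminf_le_of_frequently_le (Frequently.of_forall hm)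
    (isBoundedUnder_of ⟨0, fun k => hf₀ (u k)⟩)

theorem isClosed_setOf_le (hf : WeakSeqLowerSemicontinuous f) (hf₀ : ∀ x, 0 ≤ f x) (m : ℝ) :
    IsClosed {x | f x ≤ m} :=
  IsSeqClosed.isClosed fun _ _ hu hlim =>
    hf.le_of_forall_le hf₀ (WeakTendsto.of_tendsto hlim) hu

end WeakSeqLowerSemicontinuous

theorem norm_le_of_norm_le_on_closedBall {X Z : Type*} [NormedAddCommGroup X] [NormedSpace ℝ X]
    [NormedAddCommGroup Z] [NormedSpace ℝ Z] {T : X → Z}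
    (hT : WeakSeqLowerSemicontinuous fun u => ‖T u‖)
    {σX : ℕ → X ≃ₗᵢ[ℝ] X} {σZ : ℕ → Z ≃ₗᵢ[ℝ] Z} (hcomm : ∀ k u, T (σX k u) = σZ k (T u))
    (hweak : ∀ u, WeakTendsto (fun k => σX k u) 0)
    {u₀ : X} {r m : ℝ} (hball : ∀ v ∈ closedBall u₀ r, ‖T v‖ ≤ m) {u : X} (hu : ‖u‖ ≤ r) :
    ‖T u‖ ≤ m := by
  have horbit : ∀ k, σX k u₀ + u = σX k (u₀ + (σX k).symm u) := by simp
  have hconv : WeakTendsto (fun k => σX k u₀ + u) u := by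
    simpa only [zero_add] using (hweak u₀).add_const u
  refine hT.le_of_forall_le (fun _ => norm_nonneg _) hconv fun k => ?_
  rw [horbit, hcomm, LinearIsometryEquiv.norm_map]
  exact hball _ (by simpa [mem_closedBall, dist_eq_norm] using hu)

theorem nonlinear_uniform_boundedness_general
    (X Z : Type*) [NormedAddCommGroup X] [NormedSpace ℝ X] [CompleteSpace X]
    [NormedAddCommGroup Z] [NormedSpace ℝ Z]
    (I : Type*) (T : I → X → Z)
    -- (1) weak sequential lower semicontinuity of `u ↦ ‖T_i u‖`
    (h1 : ∀ (i : I) (u : ℕ → X) (u₀ : X), WeakTendsto u u₀ →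
      ‖T i u₀‖ ≤ atTop.liminf fun k => ‖T i (u k)‖)
    -- (2) pointwise boundedness near the origin
    (h2 : ∃ ε > (0 : ℝ), ∀ u : X, ‖u‖ ≤ ε → ∃ C : ℝ, ∀ i : I, ‖T i u‖ ≤ C)
    -- (3) commuting isometries under which every orbit is weakly null
    (h3 : ∃ (σX : ℕ → X ≃ₗᵢ[ℝ] X) (σZ : ℕ → Z ≃ₗᵢ[ℝ] Z),
      (∀ (i : I) (k : ℕ) (u : X), T i (σX k u) = σZ k (T i u)) ∧
      (∀ u : X, WeakTendsto (fun k => σX k u) 0)) :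
    ∃ δ > (0 : ℝ), ∃ C : ℝ, ∀ u : X, ‖u‖ ≤ δ → ∀ i : I, ‖T i u‖ ≤ C := by
  obtain ⟨ε, hε, h2⟩ := h2
  obtain ⟨σX, σZ, hcomm, hweak⟩ := h3
  let F : ℕ → Set X := fun m => ⋂ i, {u | ‖T i u‖ ≤ m}
  have hclosed : ∀ m, IsClosed (F m) := fun m =>
    isClosed_iInter fun i =>
      WeakSeqLowerSemicontinuous.isClosed_setOf_le (h1 i) (fun _ => norm_nonneg _) m
  have hcover : ball (0 : X) ε ⊆ ⋃ m, F m := fun u hu => by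
    obtain ⟨C, hC⟩ := h2 u (mem_ball_zero_iff.mp hu).le
    exact mem_iUnion.mpr ⟨⌈C⌉₊, mem_iInter.mpr fun i => (hC i).trans (Nat.le_ceil C)⟩
  obtain ⟨m, u₀, hu₀⟩ := exists_nonempty_interior_of_isOpen_subset_iUnion isOpen_ball
    ⟨0, mem_ball_self hε⟩ hclosed hcover
  obtain ⟨r, hr, hball⟩ := nhds_basis_closedBall.mem_iff.mp (mem_interior_iff_mem_nhds.mp hu₀)
  refine ⟨r, hr, m, fun u hu i => ?_⟩
  exact norm_le_of_norm_le_on_closedBall (h1 i) (hcomm i) hweak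
    (fun v hv => mem_iInter.mp (hball hv) i) hu

/-- **A nonlinear uniform boundedness principle** (Proposition 2.3). -/
theorem nonlinear_uniform_boundedness
    (X Z : Type*) [NormedAddCommGroup X] [NormedSpace ℝ X] [CompleteSpace X]
    [NormedAddCommGroup Z] [NormedSpace ℝ Z] [CompleteSpace Z]
    (I : Type*) (T : I → X → Z)
    -- (1) weak sequential lower semicontinuity of `u ↦ ‖T_i u‖`
    (h1 : ∀ (i : I) (u : ℕ → X) (u₀ : X), WeakTendsto u u₀ →
      ‖T i u₀‖ ≤ atTop.liminf fun k => ‖T i (u k)‖)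
    -- (2) pointwise boundedness near the origin
    (h2 : ∃ ε > (0 : ℝ), ∀ u : X, ‖u‖ ≤ ε → ∃ C : ℝ, ∀ i : I, ‖T i u‖ ≤ C)
    -- (3) commuting isometries under which every orbit is weakly null
    (h3 : ∃ (σX : ℕ → X ≃ₗᵢ[ℝ] X) (σZ : ℕ → Z ≃ₗᵢ[ℝ] Z),
      (∀ (i : I) (k : ℕ) (u : X), T i (σX k u) = σZ k (T i u)) ∧
      (∀ u : X, WeakTendsto (fun k => σX k u) 0)) :
    ∃ δ > (0 : ℝ), ∃ C : ℝ, ∀ u : X, ‖u‖ ≤ δ → ∀ i : I, ‖T i u‖ ≤ C :=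
  nonlinear_uniform_boundedness_general X Z I T h1 h2 h3
end

section
/- Let I, J ≥ 1 be natural numbers, let X_1, …, X_I and Y_1, …, Y_J be Banach spaces, and set X* := X_1* × ⋯ × X_I* with norm ‖u‖_{X*} := max_{1 ≤ i ≤ I} ‖u_i‖_{X_i*} and Y* := Y_1* × ⋯ × Y_J* with norm ‖f‖_{Y*} := max_{1 ≤ j ≤ J} ‖f_j‖_{Y_j*}, weak* convergence on these products being componentwise. Assume 𝔹_{X*} is sequentially weak* compact, let D ⊆ X* with 0 ∈ D, and let T : D → Y* satisfy: (Â1) T has weak*-to-weak* sequentially closed graph: if u_k ∈ D converge weak* to u ∈ D and T u_k converge weak* to f, then T u = f; (Â2) there are exponents 0 < r_1 ≤ ⋯ ≤ r_I and 0 < s_1 ≤ ⋯ ≤ s_J and, for each λ > 0, bijections τ_λ^D : D → D and τ_λ^{Y*} : Y* → Y* such that T ∘ τ_λ^D = τ_λ^{Y*} ∘ T, ‖(τ_λ^D u)_i‖_{X_i*} = λ^{r_i} ‖u_i‖_{X_i*} for all u ∈ D and all i, and ‖(τ_λ^{Y*} f)_j‖_{Y_j*} = λ^{s_j} ‖f_j‖_{Y_j*}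 for all f ∈ Y* and all j; (Â3) there are sequences of bijections σ_k^D : D → D with σ_k^D(0) = 0 and ‖σ_k^D u‖_{X*} = ‖u‖_{X*} for all u ∈ D, and of linear isometric isomorphisms σ_k^{Y*} : Y* → Y*, such that T ∘ σ_k^D = σ_k^{Y*} ∘ T for all k and σ_k^{Y*} f converges weak* to 0 for every f ∈ Y*; (Â4) for every ℓ ∈ ℕ the set D_ℓ := { u ∈ D : ‖u‖_{X*} ≤ ℓ and ‖T u‖_{Y*} ≤ ℓ } is weak* sequentially closed in X*. Then the following are equivalent: (1) T(D) is non-meagre in Y*; (2) T(D) = Y*; (3) T is open at the origin, i.e. for every ε > 0 there is δ > 0 such that every f ∈ Y* with ‖f‖_{Y*} ≤ δ equals T u for some u ∈ D with ‖u‖_{X*} ≤ ε; (4) there is C > 0 such that every f ∈ Y* equals T u for some u ∈ D satisfying Σ_{i=1}^I ‖u_i‖_{X_i*}^{s_J/r_i} ≤ C ‖f‖_{Y*} if ‖f‖_{Y*} ≤ 1, and Σ_{i=1}^I ‖u_i‖_{X_i*}^{s_1/r_i} ≤ C ‖f‖_{Y*} if ‖f‖_{Y*} > 1. -/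
open Filter Topology

/-- Componentwise weak-star convergence of a sequence in a finite product of dual spaces. -/
def PiWeakStarTendsto {ι : Type*} {X : ι → Type*}
    [∀ i, NormedAddCommGroup (X i)] [∀ i, NormedSpace ℝ (X i)]
    (u : ℕ → ∀ i, StrongDual ℝ (X i)) (u₀ : ∀ i, StrongDual ℝ (X i)) : Prop :=
  ∀ (i : ι) (x : X i), Tendsto (fun k => u k i x) atTop (𝓝 (u₀ i x))

/-!
Weak* compactness of balls, the closed graph and the weak* closedness of `D_ℓ` make every
`T(D_ℓ)` norm-closed. If `T(D) = ⋃ ℓ, T(D_ℓ)` is not meagre, some `T(D_ℓ)` therefore contains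
a ball `B(f₀, ρ)`. For `‖g‖ < ρ` the points `f₀ + σ_k⁻¹ g` lie in that ball, and their
preimages moved by `σ_k` are bounded solutions of `T v_k = σ_k f₀ + g ⇀* g`; a weak* limit
solves `T u = g` with `u` bounded. The scaling symmetries `τ_μ` then shrink this bounded
solvability near `0` to openness at `0`, and blow it up to every `f ∈ Y*` with the homogeneous
bounds of (4), with `μ` chosen from `‖f‖`.
-/

open Metric Set

namespace PiWeakStarTendsto

variable {ι : Type*} {X : ι → Type*} [∀ i, NormedAddCommGroup (X i)] [∀ i, NormedSpace ℝ (X i)]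
  {u : ℕ → ∀ i, StrongDual ℝ (X i)} {u₀ : ∀ i, StrongDual ℝ (X i)}

lemma of_tendsto (h : Tendsto u atTop (𝓝 u₀)) : PiWeakStarTendsto u u₀ := fun i x =>
  ((show Continuous fun v : ∀ i, StrongDual ℝ (X i) => v i x by fun_prop).tendsto u₀).comp h

lemma add_const (h : PiWeakStarTendsto u u₀) (v : ∀ i, StrongDual ℝ (X i)) :
    PiWeakStarTendsto (fun k => u k + v) (u₀ + v) := fun i x => by
  simpa using (h i x).add_const (v i x)

lemma const_smul (h : PiWeakStarTendsto u u₀) (c : ℝ) :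
    PiWeakStarTendsto (fun k => c • u k) (c • u₀) := fun i x => by
  simpa using (h i x).const_mul c

lemma comp_tendsto (h : PiWeakStarTendsto u u₀) {φ : ℕ → ℕ} (hφ : Tendsto φ atTop atTop) :
    PiWeakStarTendsto (u ∘ φ) u₀ := fun i x => (h i x).comp hφ

end PiWeakStarTendsto

section WeakStar

variable {ι κ : Type*} [Fintype ι] [Fintype κ] {X : ι → Type*} {Y : κ → Type*}
  [∀ i, NormedAddCommGroup (X i)] [∀ i, NormedSpace ℝ (X i)]
  [∀ j, NormedAddCommGroup (Y j)] [∀ j, NormedSpace ℝ (Y j)]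

variable (X) in
def WeakStarSeqCompactUnitBall : Prop :=
  ∀ u : ℕ → ∀ i, StrongDual ℝ (X i), (∀ k, ‖u k‖ ≤ 1) →
    ∃ (u₀ : ∀ i, StrongDual ℝ (X i)) (φ : ℕ → ℕ), StrictMono φ ∧ PiWeakStarTendsto (u ∘ φ) u₀

def WeakStarSeqClosed (S : Set (∀ i, StrongDual ℝ (X i))) : Prop :=
  ∀ (u : ℕ → ∀ i, StrongDual ℝ (X i)) (u₀ : ∀ i, StrongDual ℝ (X i)),
    (∀ k, u k ∈ S) → PiWeakStarTendsto u u₀ → u₀ ∈ S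

def WeakStarSeqClosedGraphOn (D : Set (∀ i, StrongDual ℝ (X i)))
    (T : (∀ i, StrongDual ℝ (X i)) → ∀ j, StrongDual ℝ (Y j)) : Prop :=
  ∀ (u : ℕ → ∀ i, StrongDual ℝ (X i)) (u₀ : ∀ i, StrongDual ℝ (X i))
    (f : ∀ j, StrongDual ℝ (Y j)), (∀ k, u k ∈ D) → u₀ ∈ D →
    PiWeakStarTendsto u u₀ → PiWeakStarTendsto (fun k => T (u k)) f → T u₀ = f

lemma WeakStarSeqCompactUnitBall.exists_subseq_of_norm_le (h : WeakStarSeqCompactUnitBall X)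
    {u : ℕ → ∀ i, StrongDual ℝ (X i)} {c : ℝ} (hu : ∀ k, ‖u k‖ ≤ c) :
    ∃ (u₀ : ∀ i, StrongDual ℝ (X i)) (φ : ℕ → ℕ), StrictMono φ ∧
      PiWeakStarTendsto (u ∘ φ) u₀ := by
  set c' := max c 1
  have hc' : 0 < c' := one_pos.trans_le (le_max_right _ _)
  obtain ⟨w₀, φ, hφ, hw⟩ := h (fun k => c'⁻¹ • u k) fun k => by
    rw [norm_smul, norm_inv, Real.norm_of_nonneg hc'.le, inv_mul_le_one₀ hc']
    exact (hu k).trans (le_max_left _ _)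
  refine ⟨c' • w₀, φ, hφ, ?_⟩
  simpa [Function.comp_def, smul_inv_smul₀ hc'.ne'] using hw.const_smul c'

end WeakStar

def truncatedDomain {E F : Type*} [Norm E] [Norm F] (D : Set E) (T : E → F) (ℓ : ℕ) : Set E :=
  {u | u ∈ D ∧ ‖u‖ ≤ ℓ ∧ ‖T u‖ ≤ ℓ}

lemma image_eq_iUnion_image_truncatedDomain {E F : Type*} [Norm E] [Norm F] (D : Set E)
    (T : E → F) : T '' D = ⋃ ℓ : ℕ, T '' truncatedDomain D T ℓ := by
  refine Subset.antisymm ?_ (iUnion_subset fun ℓ => image_mono fun u hu => hu.1)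
  rintro _ ⟨u, hu, rfl⟩
  obtain ⟨ℓ, hℓ⟩ := exists_nat_ge (max ‖u‖ ‖T u‖)
  exact mem_iUnion.2 ⟨ℓ, u, ⟨hu, (le_max_left _ _).trans hℓ, (le_max_right _ _).trans hℓ⟩, rfl⟩

lemma exists_nonempty_interior_of_not_isMeagre_iUnion {X ι : Type*} [TopologicalSpace X]
    [Countable ι] {A : ι → Set X} (hA : ∀ n, IsClosed (A n)) (h : ¬IsMeagre (⋃ n, A n)) :
    ∃ n, (interior (A n)).Nonempty := by
  contrapose! h
  exact isMeagre_iUnion fun n => ((hA n).isNowhereDense_iff.2 (h n)).isMeagre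

section Truncation

variable {ι κ : Type*} [Fintype ι] [Fintype κ] {X : ι → Type*} {Y : κ → Type*}
  [∀ i, NormedAddCommGroup (X i)] [∀ i, NormedSpace ℝ (X i)]
  [∀ j, NormedAddCommGroup (Y j)] [∀ j, NormedSpace ℝ (Y j)]
  {D : Set (∀ i, StrongDual ℝ (X i))} {T : (∀ i, StrongDual ℝ (X i)) → ∀ j, StrongDual ℝ (Y j)}
  {ℓ : ℕ}

lemma mem_image_truncatedDomain_of_piWeakStarTendsto (hball : WeakStarSeqCompactUnitBall X)
    (hgraph : WeakStarSeqClosedGraphOn D T) (hclosed : WeakStarSeqClosed (truncatedDomain D T ℓ))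
    {v : ℕ → ∀ i, StrongDual ℝ (X i)} (hv : ∀ k, v k ∈ truncatedDomain D T ℓ)
    {g : ∀ j, StrongDual ℝ (Y j)} (hTv : PiWeakStarTendsto (fun k => T (v k)) g) :
    g ∈ T '' truncatedDomain D T ℓ := by
  obtain ⟨u₀, φ, hφ, hvu₀⟩ := hball.exists_subseq_of_norm_le fun k => (hv k).2.1
  have hu₀ := hclosed (v ∘ φ) u₀ (fun k => hv (φ k)) hvu₀
  exact ⟨u₀, hu₀, hgraph (v ∘ φ) u₀ g (fun k => (hv (φ k)).1) hu₀.1 hvu₀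
    (hTv.comp_tendsto hφ.tendsto_atTop)⟩

lemma isClosed_image_truncatedDomain (hball : WeakStarSeqCompactUnitBall X)
    (hgraph : WeakStarSeqClosedGraphOn D T) (hclosed : WeakStarSeqClosed (truncatedDomain D T ℓ)) :
    IsClosed (T '' truncatedDomain D T ℓ) := by
  refine IsSeqClosed.isClosed fun f g hf hfg => ?_
  choose v hv hTv using hf
  refine mem_image_truncatedDomain_of_piWeakStarTendsto hball hgraph hclosed hv ?_
  simpa only [hTv] using PiWeakStarTendsto.of_tendsto hfg

end Truncation

section Translation

variable {ι κ : Type*} [Fintype ι] [Fintype κ] {X : ι → Type*} {Y : κ → Type*}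
  [∀ i, NormedAddCommGroup (X i)] [∀ i, NormedSpace ℝ (X i)]
  [∀ j, NormedAddCommGroup (Y j)] [∀ j, NormedSpace ℝ (Y j)]
  {D : Set (∀ i, StrongDual ℝ (X i))} {T : (∀ i, StrongDual ℝ (X i)) → ∀ j, StrongDual ℝ (Y j)}
  {σD : ℕ → (∀ i, StrongDual ℝ (X i)) → ∀ i, StrongDual ℝ (X i)}
  {σY : ℕ → (∀ j, StrongDual ℝ (Y j)) ≃ₗᵢ[ℝ] ∀ j, StrongDual ℝ (Y j)}

lemma exists_bounded_preimage_of_ball_subset_image (hball : WeakStarSeqCompactUnitBall X)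
    (hgraph : WeakStarSeqClosedGraphOn D T)
    (hclosed : ∀ ℓ : ℕ, WeakStarSeqClosed (truncatedDomain D T ℓ))
    (hσD : ∀ k, MapsTo (σD k) D D) (hσD_norm : ∀ k, ∀ u ∈ D, ‖σD k u‖ = ‖u‖)
    (hσT : ∀ k, ∀ u ∈ D, T (σD k u) = σY k (T u))
    (hσY : ∀ f, PiWeakStarTendsto (fun k => σY k f) 0)
    {ℓ : ℕ} {f₀ : ∀ j, StrongDual ℝ (Y j)} {ρ : ℝ} (hsub : ball f₀ ρ ⊆ T '' truncatedDomain D T ℓ) :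
    ∃ M : ℝ, ∀ g, ‖g‖ < ρ → ∃ u ∈ D, T u = g ∧ ‖u‖ ≤ M := by
  obtain ⟨L, hL⟩ := exists_nat_ge (max (ℓ : ℝ) (‖f₀‖ + ρ))
  refine ⟨L, fun g hg => ?_⟩
  have hmem (k : ℕ) : f₀ + (σY k).symm g ∈ T '' truncatedDomain D T ℓ :=
    hsub <| by simpa [dist_eq_norm] using hg
  choose u hu hTu using hmem
  have hTσu (k : ℕ) : T (σD k (u k)) = σY k f₀ + g := by
    rw [hσT k _ (hu k).1, hTu, map_add, LinearIsometryEquiv.apply_symm_apply]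
  have hσu (k : ℕ) : σD k (u k) ∈ truncatedDomain D T L := by
    refine ⟨hσD k (hu k).1, ?_, ?_⟩
    · rw [hσD_norm k _ (hu k).1]
      exact (hu k).2.1.trans ((le_max_left _ _).trans hL)
    · calc ‖T (σD k (u k))‖ ≤ ‖f₀‖ + ‖g‖ := by
            rw [hTσu, ← (σY k).norm_map f₀]; exact norm_add_le _ _
        _ ≤ L := by linarith [(le_max_right (ℓ : ℝ) (‖f₀‖ + ρ)).trans hL]
  have hlim : PiWeakStarTendsto (fun k => T (σD k (u k))) g := by
    simpa only [hTσu, zero_add] using (hσY f₀).add_const g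
  obtain ⟨v, hv, rfl⟩ :=
    mem_image_truncatedDomain_of_piWeakStarTendsto hball hgraph (hclosed L) hσu hlim
  exact ⟨v, hv.1, rfl, hv.2.1⟩

lemma exists_bounded_preimage_of_not_isMeagre (hball : WeakStarSeqCompactUnitBall X)
    (hgraph : WeakStarSeqClosedGraphOn D T)
    (hclosed : ∀ ℓ : ℕ, WeakStarSeqClosed (truncatedDomain D T ℓ))
    (hσD : ∀ k, MapsTo (σD k) D D) (hσD_norm : ∀ k, ∀ u ∈ D, ‖σD k u‖ = ‖u‖)
    (hσT : ∀ k, ∀ u ∈ D, T (σD k u) = σY k (T u))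
    (hσY : ∀ f, PiWeakStarTendsto (fun k => σY k f) 0) (h : ¬IsMeagre (T '' D)) :
    ∃ δ > 0, ∃ M : ℝ, ∀ g, ‖g‖ ≤ δ → ∃ u ∈ D, T u = g ∧ ‖u‖ ≤ M := by
  rw [image_eq_iUnion_image_truncatedDomain] at h
  obtain ⟨ℓ, f₀, hf₀⟩ := exists_nonempty_interior_of_not_isMeagre_iUnion
    (fun ℓ => isClosed_image_truncatedDomain hball hgraph (hclosed ℓ)) h
  obtain ⟨ρ, hρ, hball_sub⟩ := isOpen_iff.1 isOpen_interior f₀ hf₀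
  obtain ⟨M, hM⟩ := exists_bounded_preimage_of_ball_subset_image hball hgraph hclosed hσD
    hσD_norm hσT hσY (hball_sub.trans interior_subset)
  exact ⟨ρ / 2, half_pos hρ, M, fun g hg => hM g (by linarith)⟩

end Translation

lemma sum_rpow_div_le {ι : Type*} [Fintype ι] {a r : ι → ℝ} {μ t : ℝ} (ha : ∀ i, 0 ≤ a i)
    (hr : ∀ i, 0 < r i) (hμ : 0 < μ) (ht : 0 ≤ t) (hμa : ∀ i, μ ^ r i * a i ≤ 1) :
    ∑ i, a i ^ (t / r i) ≤ Fintype.card ι * (μ ^ t)⁻¹ := by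
  have hterm (i : ι) : a i ^ (t / r i) ≤ (μ ^ t)⁻¹ := calc
    a i ^ (t / r i) ≤ (μ ^ (-r i)) ^ (t / r i) := by
      refine Real.rpow_le_rpow (ha i) ?_ (div_nonneg ht (hr i).le)
      rw [Real.rpow_neg hμ.le, ← mul_one (μ ^ r i)⁻¹, le_inv_mul_iff₀ (by positivity)]
      exact hμa i
    _ = (μ ^ t)⁻¹ := by
      rw [← Real.rpow_mul hμ.le, ← Real.rpow_neg hμ.le, neg_mul, mul_div_cancel₀ _ (hr i).ne']
  simpa using Finset.sum_le_card_nsmul Finset.univ _ _ fun i _ => hterm i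

section Scaling

variable {ι κ : Type*} {X : ι → Type*} {Y : κ → Type*}
  [∀ i, NormedAddCommGroup (X i)] [∀ i, NormedSpace ℝ (X i)]
  [∀ j, NormedAddCommGroup (Y j)] [∀ j, NormedSpace ℝ (Y j)]
  {D : Set (∀ i, StrongDual ℝ (X i))} {T : (∀ i, StrongDual ℝ (X i)) → ∀ j, StrongDual ℝ (Y j)}
  {r : ι → ℝ} {s : κ → ℝ}
  {τD : ℝ → (∀ i, StrongDual ℝ (X i)) → ∀ i, StrongDual ℝ (X i)}
  {τY : ℝ → (∀ j, StrongDual ℝ (Y j)) → ∀ j, StrongDual ℝ (Y j)}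

variable (D T r s τD τY) in
def IsScalingSymmetry : Prop :=
  ∀ lam : ℝ, 0 < lam →
    Set.BijOn (τD lam) D D ∧ Function.Bijective (τY lam) ∧
    (∀ u ∈ D, T (τD lam u) = τY lam (T u)) ∧
    (∀ u ∈ D, ∀ i, ‖τD lam u i‖ = lam ^ (r i) * ‖u i‖) ∧
    (∀ f : ∀ j, StrongDual ℝ (Y j), ∀ j, ‖τY lam f j‖ = lam ^ (s j) * ‖f j‖)

namespace IsScalingSymmetry

lemma apply_zero (h : IsScalingSymmetry D T r s τD τY) (hD0 : 0 ∈ D) (hs : ∀ j, 0 < s j) : T 0 = 0 := by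
  obtain ⟨-, -, hcomm, hnormD, hnormY⟩ := h 2 two_pos
  have hτ0 : τD 2 0 = 0 := funext fun i => norm_eq_zero.1 <| by simp [hnormD 0 hD0 i]
  have hfix : τY 2 (T 0) = T 0 := by rw [← hcomm 0 hD0, hτ0]
  funext j
  have hj := hnormY (T 0) j
  rw [hfix] at hj
  have : ‖T 0 j‖ = 0 := by
    nlinarith [Real.one_lt_rpow one_lt_two (hs j), norm_nonneg (T 0 j)]
  exact norm_eq_zero.1 this

variable [Fintype ι] [Fintype κ]

lemma exists_preimage (h : IsScalingSymmetry D T r s τD τY) {δ M : ℝ} (hδ : 0 ≤ δ)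
    (hsolv : ∀ g, ‖g‖ ≤ δ → ∃ u ∈ D, T u = g ∧ ‖u‖ ≤ M) {μ : ℝ} (hμ : 0 < μ)
    {f : ∀ j, StrongDual ℝ (Y j)} (hf : ∀ j, μ ^ s j * ‖f j‖ ≤ δ) :
    ∃ v ∈ D, T v = f ∧ ∀ i, μ ^ r i * ‖v i‖ ≤ M := by
  obtain ⟨hτD, hτY, hcomm, hnormD, hnormY⟩ := h μ hμ
  obtain ⟨u, hu, hTu, huM⟩ := hsolv (τY μ f) <|
    (pi_norm_le_iff_of_nonneg hδ).2 fun j => (hnormY f j).trans_le (hf j)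
  obtain ⟨v, hv, rfl⟩ := hτD.surjOn hu
  refine ⟨v, hv, hτY.1 (by rw [← hcomm v hv, hTu]), fun i => ?_⟩
  rw [← hnormD v hv i]
  exact (norm_le_pi_norm _ i).trans huM

lemma forall_exists_preimage_of_exists_bounded_preimage (h : IsScalingSymmetry D T r s τD τY)
    {r₀ s₁ : ℝ} (hr₀ : 0 < r₀) (hr : ∀ i, r₀ ≤ r i) (hs : ∀ j, s j ≤ s₁)
    (hsolv : ∃ δ > 0, ∃ M : ℝ, ∀ g, ‖g‖ ≤ δ → ∃ u ∈ D, T u = g ∧ ‖u‖ ≤ M) :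
    ∀ ε > 0, ∃ δ > 0, ∀ f, ‖f‖ ≤ δ → ∃ u ∈ D, T u = f ∧ ‖u‖ ≤ ε := by
  obtain ⟨δ, hδ, M, hM⟩ := hsolv
  intro ε hε
  obtain ⟨μ, hMμ, hμ⟩ :=
    (((tendsto_rpow_atTop hr₀).eventually_ge_atTop (M / ε)).and (eventually_ge_atTop 1)).exists
  have hμ₀ : 0 < μ := one_pos.trans_le hμ
  refine ⟨δ / μ ^ s₁, by positivity, fun f hf => ?_⟩
  have hf' (j : κ) : μ ^ s j * ‖f j‖ ≤ δ := calc
    μ ^ s j * ‖f j‖ ≤ μ ^ s₁ * ‖f‖ := by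
      gcongr
      exacts [hs j, norm_le_pi_norm f j]
    _ ≤ δ := by rwa [le_div_iff₀' (by positivity)] at hf
  obtain ⟨v, hv, hTv, hvM⟩ := h.exists_preimage hδ.le hM hμ₀ hf'
  refine ⟨v, hv, hTv, (pi_norm_le_iff_of_nonneg hε.le).2 fun i => ?_⟩
  refine le_of_mul_le_mul_left ?_ (Real.rpow_pos_of_pos hμ₀ r₀)
  calc μ ^ r₀ * ‖v i‖ ≤ μ ^ r i * ‖v i‖ := by
        gcongr; exact hr i
    _ ≤ M := hvM i
    _ ≤ μ ^ r₀ * ε := by rw [div_le_iff₀ hε] at hMμ; linarith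

lemma exists_preimage_sum_rpow_le (h : IsScalingSymmetry D T r s τD τY) (hr : ∀ i, 0 < r i)
    {δ : ℝ} (hδ : 0 < δ) (hsolv : ∀ g, ‖g‖ ≤ δ → ∃ u ∈ D, T u = g ∧ ‖u‖ ≤ 1)
    {f : ∀ j, StrongDual ℝ (Y j)} (hf : f ≠ 0) {p : ℝ}
    (hfp : ∀ j, (δ / ‖f‖) ^ (s j / p) ≤ δ / ‖f‖) :
    ∃ v ∈ D, T v = f ∧
      ∀ t, 0 ≤ t → ∑ i, ‖v i‖ ^ (t / r i) ≤ Fintype.card ι * (‖f‖ / δ) ^ (t / p) := by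
  have hc : 0 < δ / ‖f‖ := div_pos hδ (norm_pos_iff.2 hf)
  set μ := (δ / ‖f‖) ^ p⁻¹
  have hμ : 0 < μ := Real.rpow_pos_of_pos hc _
  have hμ_rpow (x : ℝ) : μ ^ x = (δ / ‖f‖) ^ (x / p) := by
    rw [← Real.rpow_mul hc.le, inv_mul_eq_div]
  obtain ⟨v, hv, hTv, hvμ⟩ := h.exists_preimage hδ.le hsolv hμ fun j => calc
    μ ^ s j * ‖f j‖ ≤ δ / ‖f‖ * ‖f‖ := by
      rw [hμ_rpow]; gcongr; exacts [hfp j, norm_le_pi_norm f j]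
    _ = δ := div_mul_cancel₀ δ (norm_ne_zero_iff.2 hf)
  refine ⟨v, hv, hTv, fun t ht => ?_⟩
  have hsum := sum_rpow_div_le (fun i => norm_nonneg (v i)) hr hμ ht hvμ
  rwa [hμ_rpow, ← Real.inv_rpow hc.le, inv_div] at hsum

lemma exists_preimage_sum_rpow_le_of_norm_le (h : IsScalingSymmetry D T r s τD τY)
    (hr : ∀ i, 0 < r i) {s₁ : ℝ} (hs₁ : 0 < s₁) (hs : ∀ j, s j ≤ s₁) {δ : ℝ} (hδ : 0 < δ)
    (hsolv : ∀ g, ‖g‖ ≤ δ → ∃ u ∈ D, T u = g ∧ ‖u‖ ≤ 1) {f : ∀ j, StrongDual ℝ (Y j)}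
    (hf : f ≠ 0) (hfδ : ‖f‖ ≤ δ) :
    ∃ v ∈ D, T v = f ∧ ∑ i, ‖v i‖ ^ (s₁ / r i) ≤ Fintype.card ι * δ⁻¹ * ‖f‖ := by
  have hc : 1 ≤ δ / ‖f‖ := (one_le_div (norm_pos_iff.2 hf)).2 hfδ
  obtain ⟨v, hv, hTv, hsum⟩ := h.exists_preimage_sum_rpow_le hr hδ hsolv hf fun j =>
    Real.rpow_le_self_of_one_le hc ((div_le_one hs₁).2 (hs j))
  refine ⟨v, hv, hTv, (hsum s₁ hs₁.le).trans_eq ?_⟩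
  rw [div_self hs₁.ne', Real.rpow_one]
  ring

lemma exists_preimage_sum_rpow_le_of_lt_norm (h : IsScalingSymmetry D T r s τD τY)
    (hr : ∀ i, 0 < r i) {s₀ s₁ : ℝ} (hs₀ : 0 < s₀) (hs : ∀ j, s₀ ≤ s j) (hs₀₁ : s₀ ≤ s₁)
    {δ : ℝ} (hδ : 0 < δ) (hsolv : ∀ g, ‖g‖ ≤ δ → ∃ u ∈ D, T u = g ∧ ‖u‖ ≤ 1)
    {f : ∀ j, StrongDual ℝ (Y j)} (hδf : δ < ‖f‖) :
    ∃ v ∈ D, T v = f ∧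
      (‖f‖ ≤ 1 → ∑ i, ‖v i‖ ^ (s₁ / r i) ≤ Fintype.card ι * δ⁻¹ ^ (s₁ / s₀) * ‖f‖) ∧
      ∑ i, ‖v i‖ ^ (s₀ / r i) ≤ Fintype.card ι * δ⁻¹ * ‖f‖ := by
  have hf : f ≠ 0 := norm_pos_iff.1 (hδ.trans hδf)
  have hc : δ / ‖f‖ ≤ 1 := (div_le_one (hδ.trans hδf)).2 hδf.le
  obtain ⟨v, hv, hTv, hsum⟩ := h.exists_preimage_sum_rpow_le hr hδ hsolv hf fun j =>
    Real.rpow_le_self_of_le_one (by positivity) hc ((one_le_div hs₀).2 (hs j))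
  refine ⟨v, hv, hTv, fun hf₁ => ?_, ?_⟩
  · calc ∑ i, ‖v i‖ ^ (s₁ / r i) ≤ Fintype.card ι * (‖f‖ / δ) ^ (s₁ / s₀) :=
          hsum s₁ (hs₀.le.trans hs₀₁)
      _ = Fintype.card ι * δ⁻¹ ^ (s₁ / s₀) * ‖f‖ ^ (s₁ / s₀) := by
          rw [div_eq_inv_mul, Real.mul_rpow (by positivity) (norm_nonneg f), mul_assoc]
      _ ≤ Fintype.card ι * δ⁻¹ ^ (s₁ / s₀) * ‖f‖ := by
          gcongr
          exact Real.rpow_le_self_of_le_one (norm_nonneg f) hf₁ ((one_le_div hs₀).2 hs₀₁)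
  · refine (hsum s₀ hs₀.le).trans_eq ?_
    rw [div_self hs₀.ne', Real.rpow_one]
    ring

lemma exists_preimage_sum_rpow_le_mul_norm (h : IsScalingSymmetry D T r s τD τY)
    (hD0 : 0 ∈ D) [Nonempty ι] (hr : ∀ i, 0 < r i) {s₀ s₁ : ℝ} (hs₀ : 0 < s₀)
    (hs₀s : ∀ j, s₀ ≤ s j) (hss₁ : ∀ j, s j ≤ s₁) (hs₀₁ : s₀ ≤ s₁)
    (hsolv : ∃ δ > 0, ∀ g, ‖g‖ ≤ δ → ∃ u ∈ D, T u = g ∧ ‖u‖ ≤ 1) :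
    ∃ C : ℝ, 0 < C ∧ ∀ f : ∀ j, StrongDual ℝ (Y j), ∃ u ∈ D, T u = f ∧
      (‖f‖ ≤ 1 → ∑ i, ‖u i‖ ^ (s₁ / r i) ≤ C * ‖f‖) ∧
      (1 < ‖f‖ → ∑ i, ‖u i‖ ^ (s₀ / r i) ≤ C * ‖f‖) := by
  obtain ⟨δ₀, hδ₀, hsolv₀⟩ := hsolv
  set δ := min δ₀ 1
  have hδ : 0 < δ := lt_min hδ₀ one_pos
  have hsolv (g : ∀ j, StrongDual ℝ (Y j)) (hg : ‖g‖ ≤ δ) := hsolv₀ g (hg.trans (min_le_left _ _))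
  set K := δ⁻¹ + δ⁻¹ ^ (s₁ / s₀)
  have hK₁ : δ⁻¹ ≤ K := le_add_of_nonneg_right (by positivity)
  have hK₂ : δ⁻¹ ^ (s₁ / s₀) ≤ K := le_add_of_nonneg_left (by positivity)
  refine ⟨Fintype.card ι * K, by positivity, fun f => ?_⟩
  rcases eq_or_ne f 0 with rfl | hf
  · refine ⟨0, hD0, h.apply_zero hD0 fun j => hs₀.trans_le (hs₀s j), fun _ => ?_, by simp⟩
    simp [Real.zero_rpow, (hs₀.trans_le hs₀₁).ne', (hr _).ne']
  rcases le_or_gt ‖f‖ δ with hfδ | hδf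
  · obtain ⟨v, hv, hTv, hsum⟩ := h.exists_preimage_sum_rpow_le_of_norm_le hr
      (hs₀.trans_le hs₀₁) hss₁ hδ hsolv hf hfδ
    refine ⟨v, hv, hTv, fun _ => hsum.trans (by gcongr), fun hf₁ => ?_⟩
    linarith [min_le_right δ₀ 1]
  · obtain ⟨v, hv, hTv, hsum₁, hsum₀⟩ := h.exists_preimage_sum_rpow_le_of_lt_norm hr hs₀ hs₀s
      hs₀₁ hδ hsolv hδf
    exact ⟨v, hv, hTv, fun hf₁ => (hsum₁ hf₁).trans (by gcongr),
      fun _ => hsum₀.trans (by gcongr)⟩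

end IsScalingSymmetry

end Scaling

theorem general_nonlinear_open_mapping_principle_general
    (I J : ℕ)
    (X : Fin (I + 1) → Type*) (Y : Fin (J + 1) → Type*)
    [∀ i, NormedAddCommGroup (X i)] [∀ i, NormedSpace ℝ (X i)]
    [∀ j, NormedAddCommGroup (Y j)] [∀ j, NormedSpace ℝ (Y j)]
    -- sequential weak* compactness of the unit ball of X*
    (hball : ∀ u : ℕ → ∀ i, StrongDual ℝ (X i), (∀ k, ‖u k‖ ≤ 1) →
      ∃ (u₀ : ∀ i, StrongDual ℝ (X i)) (φ : ℕ → ℕ), StrictMono φ ∧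
        PiWeakStarTendsto (u ∘ φ) u₀)
    (D : Set (∀ i, StrongDual ℝ (X i))) (hD0 : 0 ∈ D)
    (T : (∀ i, StrongDual ℝ (X i)) → (∀ j, StrongDual ℝ (Y j)))
    -- (Â1) weak*-to-weak* sequentially closed graph
    (hA1 : ∀ (u : ℕ → ∀ i, StrongDual ℝ (X i)) (u₀ : ∀ i, StrongDual ℝ (X i))
      (f : ∀ j, StrongDual ℝ (Y j)), (∀ k, u k ∈ D) → u₀ ∈ D →
      PiWeakStarTendsto u u₀ → PiWeakStarTendsto (fun k => T (u k)) f → T u₀ = f)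
    -- (Â2) scaling symmetries
    (r : Fin (I + 1) → ℝ) (s : Fin (J + 1) → ℝ)
    (hr : ∀ i, 0 < r i) (hrmono : Monotone r)
    (hs : ∀ j, 0 < s j) (hsmono : Monotone s)
    (τD : ℝ → (∀ i, StrongDual ℝ (X i)) → (∀ i, StrongDual ℝ (X i)))
    (τY : ℝ → (∀ j, StrongDual ℝ (Y j)) → (∀ j, StrongDual ℝ (Y j)))
    (hA2 : ∀ lam : ℝ, 0 < lam →
      Set.BijOn (τD lam) D D ∧ Function.Bijective (τY lam) ∧
      (∀ u ∈ D, T (τD lam u) = τY lam (T u)) ∧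
      (∀ u ∈ D, ∀ i, ‖τD lam u i‖ = lam ^ (r i) * ‖u i‖) ∧
      (∀ f : ∀ j, StrongDual ℝ (Y j), ∀ j, ‖τY lam f j‖ = lam ^ (s j) * ‖f j‖))
    -- (Â3) commuting isometries with weak*-null orbits on the target
    (hA3 : ∃ (σD : ℕ → (∀ i, StrongDual ℝ (X i)) → (∀ i, StrongDual ℝ (X i)))
             (σY : ℕ → (∀ j, StrongDual ℝ (Y j)) ≃ₗᵢ[ℝ] (∀ j, StrongDual ℝ (Y j))),
      (∀ k, Set.BijOn (σD k) D D) ∧ (∀ k, σD k 0 = 0) ∧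
      (∀ k, ∀ u ∈ D, ‖σD k u‖ = ‖u‖) ∧
      (∀ k, ∀ u ∈ D, T (σD k u) = σY k (T u)) ∧
      (∀ f : ∀ j, StrongDual ℝ (Y j), PiWeakStarTendsto (fun k => σY k f) 0))
    -- (Â4) the truncated domains D_ℓ are weak* sequentially closed
    (hA4 : ∀ ℓ : ℕ, ∀ (u : ℕ → ∀ i, StrongDual ℝ (X i))
      (u₀ : ∀ i, StrongDual ℝ (X i)),
      (∀ k, u k ∈ D ∧ ‖u k‖ ≤ ℓ ∧ ‖T (u k)‖ ≤ ℓ) → PiWeakStarTendsto u u₀ →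
      u₀ ∈ D ∧ ‖u₀‖ ≤ ℓ ∧ ‖T u₀‖ ≤ ℓ) :
    List.TFAE
      [ ¬ IsMeagre (T '' D),
        T '' D = Set.univ,
        ∀ ε > (0 : ℝ), ∃ δ > (0 : ℝ), ∀ f : ∀ j, StrongDual ℝ (Y j), ‖f‖ ≤ δ →
          ∃ u ∈ D, T u = f ∧ ‖u‖ ≤ ε,
        ∃ C : ℝ, 0 < C ∧ ∀ f : ∀ j, StrongDual ℝ (Y j),
          ∃ u ∈ D, T u = f ∧
            (‖f‖ ≤ 1 → ∑ i, ‖u i‖ ^ (s (Fin.last J) / r i) ≤ C * ‖f‖) ∧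
            (1 < ‖f‖ → ∑ i, ‖u i‖ ^ (s 0 / r i) ≤ C * ‖f‖) ] := by
  obtain ⟨σD, σY, hσD, -, hσD_norm, hσT, hσY⟩ := hA3
  have hr₀ (i : Fin (I + 1)) : r 0 ≤ r i := hrmono (Fin.zero_le i)
  have hs₀ (j : Fin (J + 1)) : s 0 ≤ s j := hsmono (Fin.zero_le j)
  have hs₁ (j : Fin (J + 1)) : s j ≤ s (Fin.last J) := hsmono (Fin.le_last j)
  tfae_have 2 → 1 := fun h => h ▸ not_isMeagre_of_isOpen isOpen_univ univ_nonempty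
  tfae_have 1 → 3 := fun h =>
    IsScalingSymmetry.forall_exists_preimage_of_exists_bounded_preimage hA2 (hr 0) hr₀ hs₁ <|
      exists_bounded_preimage_of_not_isMeagre hball hA1 hA4 (fun k => (hσD k).mapsTo) hσD_norm
        hσT hσY h
  tfae_have 3 → 4 := fun h =>
    IsScalingSymmetry.exists_preimage_sum_rpow_le_mul_norm hA2 hD0 hr (hs 0) hs₀ hs₁
      (hs₀ _) (h 1 one_pos)
  tfae_have 4 → 2 := fun ⟨_, _, h⟩ => eq_univ_of_forall fun f =>
    let ⟨u, hu, hTu, _⟩ := h f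
    ⟨u, hu, hTu⟩
  tfae_finish

/-- **Theorem 5.1**: a general nonlinear open mapping principle for scale-invariant
problems, for an operator `T` defined on a subset `D` of a finite product of dual
Banach spaces (with the max norm), with values in a finite product of dual Banach
spaces. -/
theorem general_nonlinear_open_mapping_principle
    (I J : ℕ)
    (X : Fin (I + 1) → Type*) (Y : Fin (J + 1) → Type*)
    [∀ i, NormedAddCommGroup (X i)] [∀ i, NormedSpace ℝ (X i)] [∀ i, CompleteSpace (X i)]
    [∀ j, NormedAddCommGroup (Y j)] [∀ j, NormedSpace ℝ (Y j)] [∀ j, CompleteSpace (Y j)]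
    -- sequential weak* compactness of the unit ball of X*
    (hball : ∀ u : ℕ → ∀ i, StrongDual ℝ (X i), (∀ k, ‖u k‖ ≤ 1) →
      ∃ (u₀ : ∀ i, StrongDual ℝ (X i)) (φ : ℕ → ℕ), StrictMono φ ∧
        PiWeakStarTendsto (u ∘ φ) u₀)
    (D : Set (∀ i, StrongDual ℝ (X i))) (hD0 : 0 ∈ D)
    (T : (∀ i, StrongDual ℝ (X i)) → (∀ j, StrongDual ℝ (Y j)))
    -- (Â1) weak*-to-weak* sequentially closed graph
    (hA1 : ∀ (u : ℕ → ∀ i, StrongDual ℝ (X i)) (u₀ : ∀ i, StrongDual ℝ (X i))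
      (f : ∀ j, StrongDual ℝ (Y j)), (∀ k, u k ∈ D) → u₀ ∈ D →
      PiWeakStarTendsto u u₀ → PiWeakStarTendsto (fun k => T (u k)) f → T u₀ = f)
    -- (Â2) scaling symmetries
    (r : Fin (I + 1) → ℝ) (s : Fin (J + 1) → ℝ)
    (hr : ∀ i, 0 < r i) (hrmono : Monotone r)
    (hs : ∀ j, 0 < s j) (hsmono : Monotone s)
    (τD : ℝ → (∀ i, StrongDual ℝ (X i)) → (∀ i, StrongDual ℝ (X i)))
    (τY : ℝ → (∀ j, StrongDual ℝ (Y j)) → (∀ j, StrongDual ℝ (Y j)))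
    (hA2 : ∀ lam : ℝ, 0 < lam →
      Set.BijOn (τD lam) D D ∧ Function.Bijective (τY lam) ∧
      (∀ u ∈ D, T (τD lam u) = τY lam (T u)) ∧
      (∀ u ∈ D, ∀ i, ‖τD lam u i‖ = lam ^ (r i) * ‖u i‖) ∧
      (∀ f : ∀ j, StrongDual ℝ (Y j), ∀ j, ‖τY lam f j‖ = lam ^ (s j) * ‖f j‖))
    -- (Â3) commuting isometries with weak*-null orbits on the target
    (hA3 : ∃ (σD : ℕ → (∀ i, StrongDual ℝ (X i)) → (∀ i, StrongDual ℝ (X i)))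
             (σY : ℕ → (∀ j, StrongDual ℝ (Y j)) ≃ₗᵢ[ℝ] (∀ j, StrongDual ℝ (Y j))),
      (∀ k, Set.BijOn (σD k) D D) ∧ (∀ k, σD k 0 = 0) ∧
      (∀ k, ∀ u ∈ D, ‖σD k u‖ = ‖u‖) ∧
      (∀ k, ∀ u ∈ D, T (σD k u) = σY k (T u)) ∧
      (∀ f : ∀ j, StrongDual ℝ (Y j), PiWeakStarTendsto (fun k => σY k f) 0))
    -- (Â4) the truncated domains D_ℓ are weak* sequentially closed
    (hA4 : ∀ ℓ : ℕ, ∀ (u : ℕ → ∀ i, StrongDual ℝ (X i))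
      (u₀ : ∀ i, StrongDual ℝ (X i)),
      (∀ k, u k ∈ D ∧ ‖u k‖ ≤ ℓ ∧ ‖T (u k)‖ ≤ ℓ) → PiWeakStarTendsto u u₀ →
      u₀ ∈ D ∧ ‖u₀‖ ≤ ℓ ∧ ‖T u₀‖ ≤ ℓ) :
    List.TFAE
      [ ¬ IsMeagre (T '' D),
        T '' D = Set.univ,
        ∀ ε > (0 : ℝ), ∃ δ > (0 : ℝ), ∀ f : ∀ j, StrongDual ℝ (Y j), ‖f‖ ≤ δ →
          ∃ u ∈ D, T u = f ∧ ‖u‖ ≤ ε,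
        ∃ C : ℝ, 0 < C ∧ ∀ f : ∀ j, StrongDual ℝ (Y j),
          ∃ u ∈ D, T u = f ∧
            (‖f‖ ≤ 1 → ∑ i, ‖u i‖ ^ (s (Fin.last J) / r i) ≤ C * ‖f‖) ∧
            (1 < ‖f‖ → ∑ i, ‖u i‖ ^ (s 0 / r i) ≤ C * ‖f‖) ] :=
  general_nonlinear_open_mapping_principle_general I J X Y hball D hD0 T hA1 r s hr hrmono hs hsmono
    τD τY hA2 hA3 hA4
end

section
/- Let H be a nontrivial Hilbert space, n ≥ 1, p ∈ [1,2] and q ∈ [1,∞). If there exists a bounded linear map ι : L^q(ℝⁿ) → L^p(ℝⁿ; H) which is bounded below, i.e. ‖ι(f)‖_{L^p(ℝⁿ;H)} ≥ c ‖f‖_{L^q(ℝⁿ)} for some c > 0 and all f ∈ L^q(ℝⁿ), then 1 ≤ p ≤ q ≤ 2. -/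
/-!
Let `f₁, …, f_N` be the indicators of `N` disjoint unit cubes, so that every sign sum `∑ ±fᵢ`
has `L^q`-norm `N^{1/q}`, and put `gᵢ = ι fᵢ`, so that `c ≤ ‖gᵢ‖ ≤ ‖ι‖`. Average
`‖∑ ±gᵢ‖_p^p` over all `2^N` sign choices, pointwise in `H`. Since `p ≤ 2`, the average is at
most `∑ ‖gᵢ‖_p^p` (type `p` of `L^p(H)`); by Khintchine's inequality with constant `3`, which
follows from the exact second moment and the fourth moment bound of Rademacher sums in a Hilbert
space, it is at least `N^{p/2-1} ∑ ‖gᵢ‖_p^p / 3`. Comparing with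
`c N^{1/q} ≤ ‖∑ ±gᵢ‖_p ≤ ‖ι‖ N^{1/q}` gives `N^{p/q} ≲ N` and `N ≲ N^{1-p/2+p/q}` for all `N`,
hence `p ≤ q` and `q ≤ 2`.
-/

open MeasureTheory Finset Function
open scoped ENNReal RealInnerProductSpace

namespace Real

variable {ι : Type*}

theorem sq_rpow_div_two {x : ℝ} (hx : 0 ≤ x) (p : ℝ) : (x ^ 2) ^ (p / 2) = x ^ p := by
  rw [rpow_div_two_eq_sqrt _ (sq_nonneg x), sqrt_sq hx]

theorem rpow_sum_le_sum_rpow {s : Finset ι} {f : ι → ℝ} (hf : ∀ i ∈ s, 0 ≤ f i) {p : ℝ}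
    (hp0 : 0 < p) (hp1 : p ≤ 1) : (∑ i ∈ s, f i) ^ p ≤ ∑ i ∈ s, f i ^ p := by
  classical
  induction s using Finset.induction_on with
  | empty => simp [zero_rpow hp0.ne']
  | insert a s ha ih =>
    rw [sum_insert ha, sum_insert ha]
    have hs : ∀ i ∈ s, 0 ≤ f i := fun i hi => hf i (mem_insert_of_mem hi)
    calc (f a + ∑ i ∈ s, f i) ^ p ≤ f a ^ p + (∑ i ∈ s, f i) ^ p :=
          rpow_add_le_add_rpow (hf a (mem_insert_self a s)) (sum_nonneg hs) hp0.le hp1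
      _ ≤ f a ^ p + ∑ i ∈ s, f i ^ p := by gcongr; exact ih hs

theorem sum_rpow_le_card_rpow_mul_sum_sq_rpow {s : Finset ι} {f : ι → ℝ}
    (hf : ∀ i ∈ s, 0 ≤ f i) {p : ℝ} (hp0 : 0 < p) (hp2 : p ≤ 2) :
    ∑ i ∈ s, f i ^ p ≤ (#s : ℝ) ^ (1 - p / 2) * (∑ i ∈ s, f i ^ 2) ^ (p / 2) := by
  have hfp : ∀ i ∈ s, 0 ≤ f i ^ p := fun i hi => rpow_nonneg (hf i hi) p
  have hholder := rpow_sum_le_const_mul_sum_rpow_of_nonneg (s := s)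
    (one_le_div hp0 |>.mpr hp2) hfp
  have hpow : ∀ i ∈ s, (f i ^ p) ^ (2 / p) = f i ^ 2 := fun i hi => by
    rw [← rpow_mul (hf i hi), mul_div_cancel₀ _ hp0.ne', rpow_two]
  rw [sum_congr rfl hpow] at hholder
  calc ∑ i ∈ s, f i ^ p = ((∑ i ∈ s, f i ^ p) ^ (2 / p)) ^ (p / 2) := by
        rw [← rpow_mul (sum_nonneg hfp), div_mul_div_comm, mul_comm 2 p, div_self (by positivity),
          rpow_one]
    _ ≤ ((#s : ℝ) ^ (2 / p - 1) * ∑ i ∈ s, f i ^ 2) ^ (p / 2) :=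
        rpow_le_rpow (rpow_nonneg (sum_nonneg hfp) _) hholder (by positivity)
    _ = (#s : ℝ) ^ (1 - p / 2) * (∑ i ∈ s, f i ^ 2) ^ (p / 2) := by
        rw [mul_rpow (by positivity) (sum_nonneg fun i _ => sq_nonneg _),
          ← rpow_mul (by positivity)]
        congr 2
        field_simp

end Real

theorem Finset.sum_sq_pow_three_le {ι : Type*} {s : Finset ι} {z : ι → ℝ} (hz : ∀ i ∈ s, 0 ≤ z i) :
    (∑ i ∈ s, z i ^ 2) ^ 3 ≤ (∑ i ∈ s, z i) ^ 2 * ∑ i ∈ s, z i ^ 4 := by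
  have h13 : (∑ i ∈ s, z i ^ 2) ^ 2 ≤ (∑ i ∈ s, z i) * ∑ i ∈ s, z i ^ 3 :=
    sum_sq_le_sum_mul_sum_of_sq_le_mul s hz (fun i hi => pow_nonneg (hz i hi) 3)
      fun i _ => le_of_eq (by ring)
  have h24 : (∑ i ∈ s, z i ^ 3) ^ 2 ≤ (∑ i ∈ s, z i ^ 2) * ∑ i ∈ s, z i ^ 4 :=
    sum_sq_le_sum_mul_sum_of_sq_le_mul s (fun i _ => sq_nonneg _)
      (fun i hi => pow_nonneg (hz i hi) 4) fun i _ => le_of_eq (by ring)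
  have h2 : 0 ≤ ∑ i ∈ s, z i ^ 2 := sum_nonneg fun i _ => sq_nonneg _
  rcases h2.eq_or_lt with h0 | hpos
  · rw [← h0, zero_pow three_ne_zero]
    exact mul_nonneg (sq_nonneg _) (sum_nonneg fun i _ => by positivity)
  refine le_of_mul_le_mul_left ?_ hpos
  calc (∑ i ∈ s, z i ^ 2) * (∑ i ∈ s, z i ^ 2) ^ 3 = ((∑ i ∈ s, z i ^ 2) ^ 2) ^ 2 := by ring
    _ ≤ ((∑ i ∈ s, z i) * ∑ i ∈ s, z i ^ 3) ^ 2 := by gcongr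
    _ = (∑ i ∈ s, z i) ^ 2 * (∑ i ∈ s, z i ^ 3) ^ 2 := by ring
    _ ≤ (∑ i ∈ s, z i) ^ 2 * ((∑ i ∈ s, z i ^ 2) * ∑ i ∈ s, z i ^ 4) := by gcongr
    _ = _ := by ring

section SignSum

variable {ι E : Type*} [AddCommGroup E] [Module ℝ E]

-- Signs are encoded as `ι → ℤˣ`, so that flipping the `a`-th sign is the group translation by
-- `Pi.mulSingle a (-1)`, under which sums over all signs are invariant.
def signSum (s : Finset ι) (v : ι → E) (ε : ι → ℤˣ) : E :=
  ∑ i ∈ s, ((ε i : ℤ) : ℝ) • v i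

theorem map_signSum {F L : Type*} [AddCommGroup F] [Module ℝ F] [FunLike L E F]
    [LinearMapClass L ℝ E F] (T : L) (s : Finset ι) (v : ι → E) (ε : ι → ℤˣ) :
    T (signSum s v ε) = signSum s (fun i => T (v i)) ε := by
  simp only [signSum, map_sum, map_smul]

variable [DecidableEq ι]

theorem signSum_insert {s : Finset ι} {a : ι} (ha : a ∉ s) (v : ι → E) (ε : ι → ℤˣ) :
    signSum (insert a s) v ε = signSum s v ε + ((ε a : ℤ) : ℝ) • v a := by
  rw [signSum, sum_insert ha, add_comm]; rfl

theorem signSum_insert_flip {s : Finset ι} {a : ι} (ha : a ∉ s) (v : ι → E) (ε : ι → ℤˣ) :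
    signSum (insert a s) v (ε * Pi.mulSingle a (-1)) = signSum s v ε - ((ε a : ℤ) : ℝ) • v a := by
  rw [signSum_insert ha, sub_eq_add_neg]
  congr 1
  · refine sum_congr rfl fun i hi => ?_
    rw [Pi.mul_apply, Pi.mulSingle_eq_of_ne (ne_of_mem_of_not_mem hi ha), mul_one]
  · simp

end SignSum

theorem norm_units_smul {E : Type*} [SeminormedAddCommGroup E] [NormedSpace ℝ E] (u : ℤˣ) (x : E) :
    ‖((u : ℤ) : ℝ) • x‖ = ‖x‖ := by
  rcases Int.units_eq_one_or u with rfl | rfl <;> simp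

section Rademacher

variable {ι E : Type*} [NormedAddCommGroup E] [InnerProductSpace ℝ E]

theorem norm_add_sq_add_norm_sub_sq (x y : E) :
    ‖x + y‖ ^ 2 + ‖x - y‖ ^ 2 = 2 * ‖x‖ ^ 2 + 2 * ‖y‖ ^ 2 := by
  rw [norm_add_sq_real, norm_sub_sq_real]; ring

theorem norm_add_pow_four_add_norm_sub_pow_four_le (x y : E) :
    ‖x + y‖ ^ 4 + ‖x - y‖ ^ 4 ≤ 2 * ‖x‖ ^ 4 + 12 * ‖x‖ ^ 2 * ‖y‖ ^ 2 + 2 * ‖y‖ ^ 4 := by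
  have hcs : ⟪x, y⟫ ^ 2 ≤ ‖x‖ ^ 2 * ‖y‖ ^ 2 := by
    rw [← mul_pow, ← sq_abs]
    exact pow_le_pow_left₀ (abs_nonneg _) (abs_real_inner_le_norm x y) 2
  calc ‖x + y‖ ^ 4 + ‖x - y‖ ^ 4 = (‖x + y‖ ^ 2) ^ 2 + (‖x - y‖ ^ 2) ^ 2 := by ring
    _ = 2 * (‖x‖ ^ 2 + ‖y‖ ^ 2) ^ 2 + 8 * ⟪x, y⟫ ^ 2 := by
        rw [norm_add_sq_real, norm_sub_sq_real]; ring
    _ ≤ _ := by nlinarith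

variable [Fintype ι] [DecidableEq ι]

theorem sum_signs_const (x : ℝ) : ∑ _ε : ι → ℤˣ, x = 2 ^ Fintype.card ι * x := by
  simp [Fintype.card_units_int]

theorem two_mul_sum_signs_eq (a : ι) (F : (ι → ℤˣ) → ℝ) :
    2 * ∑ ε, F ε = ∑ ε, (F ε + F (ε * Pi.mulSingle a (-1))) := by
  rw [sum_add_distrib, Fintype.sum_equiv (Equiv.mulRight (Pi.mulSingle a (-1)))
    (fun ε => F (ε * Pi.mulSingle a (-1))) F fun _ => rfl,
    two_mul]

theorem sum_norm_signSum_sq (s : Finset ι) (v : ι → E) :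
    ∑ ε, ‖signSum s v ε‖ ^ 2 = 2 ^ Fintype.card ι * ∑ i ∈ s, ‖v i‖ ^ 2 := by
  induction s using Finset.induction_on with
  | empty => simp [signSum]
  | insert a s ha ih =>
    have hstep : ∀ ε, ‖signSum (insert a s) v ε‖ ^ 2
        + ‖signSum (insert a s) v (ε * Pi.mulSingle a (-1))‖ ^ 2
        = 2 * ‖signSum s v ε‖ ^ 2 + 2 * ‖v a‖ ^ 2 := fun ε => by
      rw [signSum_insert ha, signSum_insert_flip ha, norm_add_sq_add_norm_sub_sq, norm_units_smul]
    have hpair := two_mul_sum_signs_eq a fun ε => ‖signSum (insert a s) v ε‖ ^ 2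
    rw [sum_congr rfl fun ε _ => hstep ε, sum_add_distrib, ← mul_sum, ih, sum_signs_const]
      at hpair
    rw [sum_insert ha]
    linarith

theorem sum_norm_signSum_pow_four_le (s : Finset ι) (v : ι → E) :
    ∑ ε, ‖signSum s v ε‖ ^ 4 ≤ 3 * 2 ^ Fintype.card ι * (∑ i ∈ s, ‖v i‖ ^ 2) ^ 2 := by
  induction s using Finset.induction_on with
  | empty => simp [signSum]
  | insert a s ha ih =>
    have hstep : ∀ ε, ‖signSum (insert a s) v ε‖ ^ 4
        + ‖signSum (insert a s) v (ε * Pi.mulSingle a (-1))‖ ^ 4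
        ≤ 2 * ‖signSum s v ε‖ ^ 4 + 12 * ‖v a‖ ^ 2 * ‖signSum s v ε‖ ^ 2 + 2 * ‖v a‖ ^ 4 := by
      intro ε
      rw [signSum_insert ha, signSum_insert_flip ha]
      have := norm_add_pow_four_add_norm_sub_pow_four_le (signSum s v ε) (((ε a : ℤ) : ℝ) • v a)
      rw [norm_units_smul] at this
      linarith
    have hpair := (two_mul_sum_signs_eq a fun ε => ‖signSum (insert a s) v ε‖ ^ 4).trans_le
      (sum_le_sum fun ε _ => hstep ε)
    rw [sum_add_distrib, sum_add_distrib, ← mul_sum, ← mul_sum, sum_norm_signSum_sq,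
      sum_signs_const] at hpair
    rw [sum_insert ha]
    have h2N : (0 : ℝ) < 2 ^ Fintype.card ι := by positivity
    nlinarith [mul_nonneg h2N.le (pow_nonneg (norm_nonneg (v a)) 4)]

theorem rpow_sum_norm_sq_le_sum_norm_signSum_rpow (v : ι → E) {p : ℝ} (hp1 : 1 ≤ p)
    (hp2 : p ≤ 2) :
    2 ^ Fintype.card ι * (∑ i, ‖v i‖ ^ 2) ^ (p / 2) ≤ 3 * ∑ ε, ‖signSum univ v ε‖ ^ p := by
  set M : ℝ := 2 ^ Fintype.card ι
  set σ := ∑ i, ‖v i‖ ^ 2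
  set z : (ι → ℤˣ) → ℝ := fun ε => ‖signSum univ v ε‖
  have hM : 0 < M := by positivity
  have hσ : 0 ≤ σ := sum_nonneg fun i _ => sq_nonneg _
  have hz : ∀ ε ∈ univ, 0 ≤ z ε := fun ε _ => norm_nonneg _
  -- the fourth moment bound lets the first moment control the second one
  have hmoments : (M * σ) ^ 3 ≤ (∑ ε, z ε) ^ 2 * (3 * M * σ ^ 2) := by
    rw [← sum_norm_signSum_sq]
    exact (sum_sq_pow_three_le hz).trans (by gcongr; exact sum_norm_signSum_pow_four_le _ _)
  have hσ_le : σ ≤ 3 * (M⁻¹ * ∑ ε, z ε) ^ 2 := by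
    rcases hσ.eq_or_lt with h0 | hσ0
    · rw [← h0]; positivity
    refine le_of_mul_le_mul_left ?_ (by positivity : 0 < M ^ 3 * σ ^ 2)
    calc M ^ 3 * σ ^ 2 * σ = (M * σ) ^ 3 := by ring
      _ ≤ (∑ ε, z ε) ^ 2 * (3 * M * σ ^ 2) := hmoments
      _ = M ^ 3 * σ ^ 2 * (3 * (M⁻¹ * ∑ ε, z ε) ^ 2) := by field_simp
  have hjensen : (M⁻¹ * ∑ ε, z ε) ^ p ≤ M⁻¹ * ∑ ε, z ε ^ p := by
    simpa only [← mul_sum] using Real.rpow_arith_mean_le_arith_mean_rpow univ (fun _ => M⁻¹) z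
      (fun _ _ => by positivity) (by rw [sum_signs_const, mul_inv_cancel₀ hM.ne']) hz hp1
  have hm : 0 ≤ M⁻¹ * ∑ ε, z ε := by positivity
  calc M * σ ^ (p / 2) ≤ M * (3 * (M⁻¹ * ∑ ε, z ε) ^ 2) ^ (p / 2) := by gcongr
    _ = M * (3 ^ (p / 2) * (M⁻¹ * ∑ ε, z ε) ^ p) := by
        rw [Real.mul_rpow (by norm_num) (sq_nonneg _), Real.sq_rpow_div_two hm]
    _ ≤ M * (3 * (M⁻¹ * ∑ ε, z ε ^ p)) := by
        gcongr
        exact Real.rpow_le_self_of_one_le (by norm_num) (by linarith)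
    _ = 3 * ∑ ε, z ε ^ p := by field_simp

theorem sum_norm_signSum_rpow_le (v : ι → E) {p : ℝ} (hp0 : 0 < p) (hp2 : p ≤ 2) :
    ∑ ε, ‖signSum univ v ε‖ ^ p ≤ 2 ^ Fintype.card ι * ∑ i, ‖v i‖ ^ p := by
  set M : ℝ := 2 ^ Fintype.card ι
  have hM : 0 < M := by positivity
  have hcard : ((univ : Finset (ι → ℤˣ)).card : ℝ) = M := by simp [M, Fintype.card_units_int]
  have hsub : (∑ i, ‖v i‖ ^ 2) ^ (p / 2) ≤ ∑ i, ‖v i‖ ^ p := by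
    simpa only [Real.sq_rpow_div_two (norm_nonneg _)] using
      Real.rpow_sum_le_sum_rpow (p := p / 2) (fun i _ => sq_nonneg ‖v i‖) (by positivity)
        (by linarith)
  calc ∑ ε, ‖signSum univ v ε‖ ^ p
      ≤ M ^ (1 - p / 2) * (∑ ε, ‖signSum univ v ε‖ ^ 2) ^ (p / 2) := by
        rw [← hcard]
        exact Real.sum_rpow_le_card_rpow_mul_sum_sq_rpow (fun _ _ => norm_nonneg _) hp0 hp2
    _ = M * (∑ i, ‖v i‖ ^ 2) ^ (p / 2) := by
        rw [sum_norm_signSum_sq, Real.mul_rpow hM.le (sum_nonneg fun i _ => sq_nonneg _),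
          ← mul_assoc, ← Real.rpow_add hM, sub_add_cancel, Real.rpow_one]
    _ ≤ M * ∑ i, ‖v i‖ ^ p := by gcongr

theorem two_pow_card_mul_sum_norm_rpow_le (v : ι → E) {p : ℝ} (hp1 : 1 ≤ p) (hp2 : p ≤ 2) :
    2 ^ Fintype.card ι * ∑ i, ‖v i‖ ^ p
      ≤ 3 * (Fintype.card ι : ℝ) ^ (1 - p / 2) * ∑ ε, ‖signSum univ v ε‖ ^ p := by
  have hpow := Real.sum_rpow_le_card_rpow_mul_sum_sq_rpow (s := univ) (f := fun i => ‖v i‖)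
    (fun i _ => norm_nonneg _) (by linarith) hp2
  rw [card_univ] at hpow
  calc 2 ^ Fintype.card ι * ∑ i, ‖v i‖ ^ p
      ≤ (Fintype.card ι : ℝ) ^ (1 - p / 2) * (2 ^ Fintype.card ι * (∑ i, ‖v i‖ ^ 2) ^ (p / 2)) := by
        rw [mul_left_comm]; gcongr
    _ ≤ (Fintype.card ι : ℝ) ^ (1 - p / 2) * (3 * ∑ ε, ‖signSum univ v ε‖ ^ p) :=
        mul_le_mul_of_nonneg_left (rpow_sum_norm_sq_le_sum_norm_signSum_rpow v hp1 hp2)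
          (by positivity)
    _ = _ := by ring

end Rademacher

theorem ENNReal.toReal_mem_Icc_one_two {P : ℝ≥0∞} (h1 : 1 ≤ P) (h2 : P ≤ 2) :
    P.toReal ∈ Set.Icc 1 2 := by
  have hP : P ≠ ∞ := ne_top_of_le_ne_top ENNReal.ofNat_ne_top h2
  exact ⟨by simpa using ENNReal.toReal_mono hP h1, by simpa using ENNReal.toReal_mono (by simp) h2⟩

namespace MeasureTheory.Lp

variable {α E : Type*} [MeasurableSpace α] {μ : Measure α} [NormedAddCommGroup E] {P : ℝ≥0∞}

theorem norm_rpow_eq_integral [Fact (1 ≤ P)] (hP : P ≠ ∞) (f : Lp E P μ) :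
    ‖f‖ ^ P.toReal = ∫ x, ‖f x‖ ^ P.toReal ∂μ := by
  have hP0 : P ≠ 0 := (zero_lt_one.trans_le Fact.out).ne'
  have hint : 0 ≤ ∫ x, ‖f x‖ ^ P.toReal ∂μ := integral_nonneg fun x => by positivity
  rw [norm_def, (Lp.memLp f).eLpNorm_eq_integral_rpow_norm hP0 hP,
    ENNReal.toReal_ofReal (by positivity), Real.rpow_inv_rpow hint (ENNReal.toReal_pos hP0 hP).ne']

theorem integrable_norm_rpow [Fact (1 ≤ P)] (hP : P ≠ ∞) (f : Lp E P μ) :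
    Integrable (fun x => ‖f x‖ ^ P.toReal) μ :=
  (Lp.memLp f).integrable_norm_rpow (zero_lt_one.trans_le Fact.out).ne' hP

theorem coeFn_signSum [NormedSpace ℝ E] {ι : Type*} [DecidableEq ι] (s : Finset ι)
    (g : ι → Lp E P μ) (ε : ι → ℤˣ) :
    ⇑(signSum s g ε) =ᵐ[μ] fun x => signSum s (fun i => g i x) ε := by
  induction s using Finset.induction_on with
  | empty =>
    simp only [signSum, sum_empty]
    exact Lp.coeFn_zero E P μ
  | insert a s ha ih =>
    filter_upwards [Lp.coeFn_add (signSum s g ε) (((ε a : ℤ) : ℝ) • g a),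
      Lp.coeFn_smul ((ε a : ℤ) : ℝ) (g a), ih] with x hadd hsmul hs
    rw [signSum_insert ha, hadd, Pi.add_apply, hsmul, hs, signSum_insert ha, Pi.smul_apply]

section InnerProductSpace

variable {ι H : Type*} [Fintype ι] [DecidableEq ι] [NormedAddCommGroup H] [InnerProductSpace ℝ H]
  [Fact (1 ≤ P)]

theorem sum_norm_signSum_rpow_le (hP2 : P ≤ 2) (g : ι → Lp H P μ) :
    ∑ ε, ‖signSum univ g ε‖ ^ P.toReal ≤ 2 ^ Fintype.card ι * ∑ i, ‖g i‖ ^ P.toReal := by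
  have hP : P ≠ ∞ := ne_top_of_le_ne_top ENNReal.ofNat_ne_top hP2
  obtain ⟨hp1, hp2⟩ := ENNReal.toReal_mem_Icc_one_two Fact.out hP2
  simp only [norm_rpow_eq_integral hP]
  rw [← integral_finsetSum _ fun ε _ => integrable_norm_rpow hP _,
    ← integral_finsetSum _ fun i _ => integrable_norm_rpow hP _, ← integral_const_mul]
  refine integral_mono_ae (integrable_finsetSum _ fun ε _ => integrable_norm_rpow hP _)
    ((integrable_finsetSum _ fun i _ => integrable_norm_rpow hP _).const_mul _) ?_
  filter_upwards [ae_all_iff.2 fun ε => coeFn_signSum univ g ε] with x hx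
  simp only [hx]
  exact _root_.sum_norm_signSum_rpow_le _ (by linarith) hp2

theorem two_pow_card_mul_sum_norm_rpow_le (hP2 : P ≤ 2) (g : ι → Lp H P μ) :
    2 ^ Fintype.card ι * ∑ i, ‖g i‖ ^ P.toReal
      ≤ 3 * (Fintype.card ι : ℝ) ^ (1 - P.toReal / 2) * ∑ ε, ‖signSum univ g ε‖ ^ P.toReal := by
  have hP : P ≠ ∞ := ne_top_of_le_ne_top ENNReal.ofNat_ne_top hP2
  obtain ⟨hp1, hp2⟩ := ENNReal.toReal_mem_Icc_one_two Fact.out hP2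
  simp only [norm_rpow_eq_integral hP]
  rw [← integral_finsetSum _ fun ε _ => integrable_norm_rpow hP _,
    ← integral_finsetSum _ fun i _ => integrable_norm_rpow hP _, ← integral_const_mul,
    ← integral_const_mul]
  refine integral_mono_ae
    ((integrable_finsetSum _ fun i _ => integrable_norm_rpow hP _).const_mul _)
    ((integrable_finsetSum _ fun ε _ => integrable_norm_rpow hP _).const_mul _) ?_
  filter_upwards [ae_all_iff.2 fun ε => coeFn_signSum univ g ε] with x hx
  simp only [hx]
  exact _root_.two_pow_card_mul_sum_norm_rpow_le _ hp1 hp2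

theorem rpow_le_card_mul_rpow_of_le_norm_signSum (hP2 : P ≤ 2) {g : ι → Lp H P μ} {a b : ℝ}
    (hb : 0 ≤ b) (hg : ∀ i, ‖g i‖ ≤ a) (hS : ∀ ε, b ≤ ‖signSum univ g ε‖) :
    b ^ P.toReal ≤ Fintype.card ι * a ^ P.toReal := by
  refine le_of_mul_le_mul_left ?_ (by positivity : (0 : ℝ) < 2 ^ Fintype.card ι)
  calc 2 ^ Fintype.card ι * b ^ P.toReal = ∑ _ε : ι → ℤˣ, b ^ P.toReal := (sum_signs_const _).symm
    _ ≤ ∑ ε, ‖signSum univ g ε‖ ^ P.toReal := by gcongr with ε; exact hS ε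
    _ ≤ 2 ^ Fintype.card ι * ∑ i, ‖g i‖ ^ P.toReal := sum_norm_signSum_rpow_le hP2 g
    _ ≤ 2 ^ Fintype.card ι * ∑ _i : ι, a ^ P.toReal := by
        gcongr with i; exact hg i
    _ = 2 ^ Fintype.card ι * (Fintype.card ι * a ^ P.toReal) := by
        rw [sum_const, card_univ, nsmul_eq_mul]

theorem card_mul_rpow_le_of_norm_signSum_le (hP2 : P ≤ 2) {g : ι → Lp H P μ} {B c : ℝ}
    (hc : 0 ≤ c) (hg : ∀ i, c ≤ ‖g i‖) (hS : ∀ ε, ‖signSum univ g ε‖ ≤ B) :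
    Fintype.card ι * c ^ P.toReal
      ≤ 3 * (Fintype.card ι : ℝ) ^ (1 - P.toReal / 2) * B ^ P.toReal := by
  refine le_of_mul_le_mul_left ?_ (by positivity : (0 : ℝ) < 2 ^ Fintype.card ι)
  calc 2 ^ Fintype.card ι * (Fintype.card ι * c ^ P.toReal)
      = 2 ^ Fintype.card ι * ∑ _i : ι, c ^ P.toReal := by rw [sum_const, card_univ, nsmul_eq_mul]
    _ ≤ 2 ^ Fintype.card ι * ∑ i, ‖g i‖ ^ P.toReal := by gcongr with i; exact hg i
    _ ≤ 3 * (Fintype.card ι : ℝ) ^ (1 - P.toReal / 2) * ∑ ε, ‖signSum univ g ε‖ ^ P.toReal :=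
        two_pow_card_mul_sum_norm_rpow_le hP2 g
    _ ≤ 3 * (Fintype.card ι : ℝ) ^ (1 - P.toReal / 2) * ∑ _ε : ι → ℤˣ, B ^ P.toReal := by
        gcongr with ε; exact hS ε
    _ = 2 ^ Fintype.card ι * (3 * (Fintype.card ι : ℝ) ^ (1 - P.toReal / 2) * B ^ P.toReal) := by
        rw [sum_signs_const]; ring

end InnerProductSpace

end MeasureTheory.Lp

section DisjointIndicators

variable {α ι : Type*} [Fintype ι] {A : ι → Set α}

theorem norm_signSum_indicator_one (hA : Pairwise (Disjoint on A)) (ε : ι → ℤˣ) (x : α) :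
    ‖signSum univ (fun i => (A i).indicator (fun _ => (1 : ℝ)) x) ε‖
      = (⋃ i, A i).indicator (fun _ => (1 : ℝ)) x := by
  by_cases hx : x ∈ ⋃ i, A i
  · obtain ⟨j, hj⟩ := Set.mem_iUnion.1 hx
    have hzero : ∀ i ≠ j, (A i).indicator (fun _ => (1 : ℝ)) x = 0 := fun i hij =>
      Set.indicator_of_notMem (Set.disjoint_left.1 (hA hij.symm) hj) _
    rw [signSum, sum_eq_single j (fun i _ hij => by rw [hzero i hij, smul_zero]) (by simp),
      Set.indicator_of_mem hx, Set.indicator_of_mem hj, norm_units_smul, norm_one]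
  · rw [Set.indicator_of_notMem hx]
    simp only [Set.mem_iUnion, not_exists] at hx
    simp [signSum, Set.indicator_of_notMem (hx _)]

theorem norm_signSum_indicatorConstLp [MeasurableSpace α] {μ : Measure α} [DecidableEq ι]
    {Q : ℝ≥0∞} [Fact (1 ≤ Q)] (hQ : Q ≠ ∞)
    (hAm : ∀ i, MeasurableSet (A i)) (hμA : ∀ i, μ (A i) = 1) (hA : Pairwise (Disjoint on A))
    (ε : ι → ℤˣ) :
    ‖signSum univ (fun i => indicatorConstLp Q (hAm i) ((hμA i).trans_ne ENNReal.one_ne_top)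
      (1 : ℝ)) ε‖ = (Fintype.card ι : ℝ) ^ (1 / Q.toReal) := by
  have hμU : μ (⋃ i, A i) = Fintype.card ι := by
    simp [measure_iUnion hA hAm, tsum_fintype, hμA]
  set u : Lp ℝ Q μ :=
    indicatorConstLp Q (MeasurableSet.iUnion hAm) (hμU.trans_ne (ENNReal.natCast_ne_top _)) 1
  have hu : u =ᵐ[μ] (⋃ i, A i).indicator fun _ => (1 : ℝ) := indicatorConstLp_coeFn
  have hu_norm : ‖u‖ = (Fintype.card ι : ℝ) ^ (1 / Q.toReal) := by
    rw [norm_indicatorConstLp (zero_lt_one.trans_le Fact.out).ne' hQ, norm_one, one_mul,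
      measureReal_def, hμU, ENNReal.toReal_natCast]
  set f : ι → Lp ℝ Q μ := fun i =>
    indicatorConstLp Q (hAm i) ((hμA i).trans_ne ENNReal.one_ne_top) 1
  have hf : ∀ᵐ x ∂μ, ∀ i, f i x = (A i).indicator (fun _ => (1 : ℝ)) x :=
    ae_all_iff.2 fun i => indicatorConstLp_coeFn
  rw [← hu_norm]
  refine le_antisymm (Lp.norm_le_norm_of_ae_le ?_) (Lp.norm_le_norm_of_ae_le ?_) <;>
  · filter_upwards [Lp.coeFn_signSum univ f ε, hf, hu] with x hsum hf hu
    rw [hsum, hu, ← norm_signSum_indicator_one hA ε x]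
    simp only [hf, Real.norm_eq_abs, abs_abs, le_rfl]

end DisjointIndicators

theorem le_of_forall_mul_natCast_rpow_le {α β c C : ℝ} (hc : 0 < c)
    (h : ∀ N : ℕ, 0 < N → c * (N : ℝ) ^ α ≤ C * (N : ℝ) ^ β) : α ≤ β := by
  by_contra! hlt
  obtain ⟨N, hN, hN0⟩ := ((((tendsto_rpow_atTop (sub_pos.2 hlt)).comp
    tendsto_natCast_atTop_atTop).eventually_gt_atTop (C / c)).and
      (Filter.eventually_gt_atTop 0)).exists
  have hNpos : (0 : ℝ) < N := Nat.cast_pos.2 hN0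
  have hNβ : 0 < (N : ℝ) ^ β := Real.rpow_pos_of_pos hNpos β
  have hgrow : C < c * (N : ℝ) ^ (α - β) := (div_lt_iff₀' hc).1 hN
  have hbound := h N hN0
  rw [← sub_add_cancel α β, Real.rpow_add hNpos, ← mul_assoc] at hbound
  nlinarith

namespace MeasureTheory.Lp

theorem rpow_bounds_of_bounded_below {β E H : Type*} [MeasurableSpace β] {ν : Measure β}
    [NormedAddCommGroup E] [NormedSpace ℝ E] [NormedAddCommGroup H] [InnerProductSpace ℝ H]
    {P : ℝ≥0∞} [Fact (1 ≤ P)] (hP2 : P ≤ 2) (T : E →L[ℝ] Lp H P ν) {c : ℝ} (hc : 0 ≤ c)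
    (hT : ∀ f, c * ‖f‖ ≤ ‖T f‖) {q : ℝ} {N : ℕ} (hN : 0 < N) {f : Fin N → E}
    (hf : ∀ i, ‖f i‖ = 1) (hF : ∀ ε, ‖signSum univ f ε‖ = (N : ℝ) ^ (1 / q)) :
    c ^ P.toReal * (N : ℝ) ^ (P.toReal / q) ≤ ‖T‖ ^ P.toReal * (N : ℝ) ^ (1 : ℝ) ∧
      c ^ P.toReal * (N : ℝ) ^ (1 : ℝ)
        ≤ 3 * ‖T‖ ^ P.toReal * (N : ℝ) ^ (1 - P.toReal / 2 + P.toReal / q) := by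
  set p := P.toReal
  have hN' : (0 : ℝ) < N := Nat.cast_pos.2 hN
  have hg_le : ∀ i, ‖T (f i)‖ ≤ ‖T‖ := fun i => by simpa [hf i] using T.le_opNorm (f i)
  have hg_ge : ∀ i, c ≤ ‖T (f i)‖ := fun i => by simpa [hf i] using hT (f i)
  have hS_le : ∀ ε, ‖signSum univ (fun i => T (f i)) ε‖ ≤ ‖T‖ * (N : ℝ) ^ (1 / q) := fun ε => by
    rw [← hF ε, ← map_signSum]; exact T.le_opNorm _
  have hS_ge : ∀ ε, c * (N : ℝ) ^ (1 / q) ≤ ‖signSum univ (fun i => T (f i)) ε‖ := fun ε => by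
    rw [← hF ε, ← map_signSum]; exact hT _
  have hpow : ∀ x : ℝ, 0 ≤ x → (x * (N : ℝ) ^ (1 / q)) ^ p = x ^ p * (N : ℝ) ^ (p / q) :=
    fun x hx => by rw [Real.mul_rpow hx (by positivity), ← Real.rpow_mul hN'.le, one_div_mul_eq_div]
  constructor
  · have := rpow_le_card_mul_rpow_of_le_norm_signSum hP2 (by positivity) hg_le hS_ge
    rw [hpow c hc, Fintype.card_fin] at this
    rw [Real.rpow_one]; linarith
  · have := card_mul_rpow_le_of_norm_signSum_le hP2 hc hg_ge hS_le
    rw [hpow _ (norm_nonneg T), Fintype.card_fin] at this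
    rw [Real.rpow_add hN', Real.rpow_one]; linarith

theorem le_and_le_two_of_bounded_below {α β H : Type*} [MeasurableSpace α] [MeasurableSpace β]
    [NormedAddCommGroup H] [InnerProductSpace ℝ H] {μ : Measure α} {ν : Measure β}
    {A : ℕ → Set α} (hAm : ∀ i, MeasurableSet (A i)) (hμA : ∀ i, μ (A i) = 1)
    (hA : Pairwise (Disjoint on A)) {P Q : ℝ≥0∞} [Fact (1 ≤ P)] [Fact (1 ≤ Q)] (hP2 : P ≤ 2)
    (hQ : Q ≠ ∞) (T : Lp ℝ Q μ →L[ℝ] Lp H P ν) {c : ℝ} (hc : 0 < c)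
    (hT : ∀ f, c * ‖f‖ ≤ ‖T f‖) : P ≤ Q ∧ Q ≤ 2 := by
  obtain ⟨hp1, -⟩ := ENNReal.toReal_mem_Icc_one_two Fact.out hP2
  have hq1 : 1 ≤ Q.toReal := by simpa using ENNReal.toReal_mono hQ (Fact.out : 1 ≤ Q)
  have hbounds (N : ℕ) (hN : 0 < N) := by
    refine rpow_bounds_of_bounded_below hP2 T hc.le hT (q := Q.toReal) hN
      (f := fun i : Fin N => indicatorConstLp Q (hAm i) ((hμA i).trans_ne ENNReal.one_ne_top) 1)
      (fun i => ?_) (fun ε => ?_)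
    · simp [norm_indicatorConstLp (zero_lt_one.trans_le Fact.out).ne' hQ, measureReal_def, hμA]
    · simpa using norm_signSum_indicatorConstLp hQ (fun i : Fin N => hAm i) (fun i => hμA i)
        (hA.comp_of_injective Fin.val_injective) ε
  have hcp : 0 < c ^ P.toReal := Real.rpow_pos_of_pos hc _
  have hpq := le_of_forall_mul_natCast_rpow_le hcp fun N hN => (hbounds N hN).1
  have hq2 := le_of_forall_mul_natCast_rpow_le hcp fun N hN => (hbounds N hN).2
  constructor
  · rw [← ENNReal.toReal_le_toReal (ne_top_of_le_ne_top ENNReal.ofNat_ne_top hP2) hQ]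
    exact (div_le_one (by positivity)).1 hpq
  · rw [← ENNReal.toReal_le_toReal hQ ENNReal.ofNat_ne_top]
    simpa using (div_le_div_iff_of_pos_left (by positivity) (by positivity) (by positivity)).1
      (by linarith : P.toReal / 2 ≤ P.toReal / Q.toReal)

end MeasureTheory.Lp

def diagonalUnitCube (n i : ℕ) : Set (Fin n → ℝ) :=
  Set.univ.pi fun _ => Set.Ico (i : ℝ) (i + 1)

theorem measurableSet_diagonalUnitCube (n i : ℕ) : MeasurableSet (diagonalUnitCube n i) :=
  MeasurableSet.univ_pi fun _ => measurableSet_Ico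

theorem volume_diagonalUnitCube (n i : ℕ) : volume (diagonalUnitCube n i) = 1 := by
  simp [diagonalUnitCube, volume_pi_pi]

theorem pairwise_disjoint_diagonalUnitCube {n : ℕ} (hn : 1 ≤ n) :
    Pairwise (Disjoint on diagonalUnitCube n) := fun i k hik =>
  Set.disjoint_univ_pi.2 ⟨⟨0, hn⟩, by
    simpa using Set.pairwise_disjoint_Ico_intCast ℝ (Nat.cast_injective.ne hik : (i : ℤ) ≠ k)⟩

theorem embedding_Lq_into_LpH_exponent_range_general
    (H : Type*) [NormedAddCommGroup H] [InnerProductSpace ℝ H]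
    (n : ℕ) (hn : 1 ≤ n) (p q : ℝ)
    (hp2 : p ≤ 2) (hq1 : 1 ≤ q)
    [Fact (1 ≤ ENNReal.ofReal p)] [Fact (1 ≤ ENNReal.ofReal q)]
    (ι : Lp ℝ (ENNReal.ofReal q) (volume : Measure (Fin n → ℝ)) →L[ℝ]
         Lp H (ENNReal.ofReal p) (volume : Measure (Fin n → ℝ)))
    (c : ℝ) (hc : 0 < c)
    (hbelow : ∀ f : Lp ℝ (ENNReal.ofReal q) (volume : Measure (Fin n → ℝ)),
      c * ‖f‖ ≤ ‖ι f‖) :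
    p ≤ q ∧ q ≤ 2 := by
  have hP2 : ENNReal.ofReal p ≤ 2 := by simpa using ENNReal.ofReal_le_ofReal hp2
  obtain ⟨hpq, hq2⟩ := Lp.le_and_le_two_of_bounded_below (measurableSet_diagonalUnitCube n)
    (volume_diagonalUnitCube n) (pairwise_disjoint_diagonalUnitCube hn) hP2 ENNReal.ofReal_ne_top
    ι hc hbelow
  exact ⟨(ENNReal.ofReal_le_ofReal_iff (by linarith)).1 hpq,
    by simpa using (ENNReal.ofReal_le_iff_le_toReal ENNReal.ofNat_ne_top).1 hq2⟩

/-- **Lemma 4.5**: if `L^q(ℝⁿ)` embeds isomorphically into the Bochner space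
`L^p(ℝⁿ; H)` with `H` a nontrivial Hilbert space and `p ∈ [1,2]`, `q ∈ [1,∞)`,
then `1 ≤ p ≤ q ≤ 2`. -/
theorem embedding_Lq_into_LpH_exponent_range
    (H : Type*) [NormedAddCommGroup H] [InnerProductSpace ℝ H]
    [CompleteSpace H] [Nontrivial H]
    (n : ℕ) (hn : 1 ≤ n) (p q : ℝ)
    (hp1 : 1 ≤ p) (hp2 : p ≤ 2) (hq1 : 1 ≤ q)
    [Fact (1 ≤ ENNReal.ofReal p)] [Fact (1 ≤ ENNReal.ofReal q)]
    (ι : Lp ℝ (ENNReal.ofReal q) (volume : Measure (Fin n → ℝ)) →L[ℝ]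
         Lp H (ENNReal.ofReal p) (volume : Measure (Fin n → ℝ)))
    (c : ℝ) (hc : 0 < c)
    (hbelow : ∀ f : Lp ℝ (ENNReal.ofReal q) (volume : Measure (Fin n → ℝ)),
      c * ‖f‖ ≤ ‖ι f‖) :
    p ≤ q ∧ q ≤ 2 :=
  embedding_Lq_into_LpH_exponent_range_general H n hn p q hp2 hq1 ι c hc hbelow
end
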